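/- arXiv:2605.14184 — 10 statements merged into one kernel-verified Lean document; each statement's English description precedes it below -/
import Mathlib

section
/- For all natural numbers n, ∑_{k=0}^{2n} (-1)^k · C(2k,k) · C(4n-2k, 2n-k) = 2^{2n} · C(2n,n), and for odd upper index m, ∑_{k=0}^{m} (-1)^k · C(2k,k) · C(2m-2k, m-k) = 0. -/
open Finset

/-- A m = C(2m, m) as an integer. -/
private def A (m : ℕ) : ℤ := ((2 * m).choose m : ℤ)

private def Cat (m : ℕ) : ℤ := (catalan m : ℤ)

private lemma A_eq (m : ℕ) : A m = (m.centralBinom : ℤ) := by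
  simp [A, Nat.centralBinom]

private lemma hA_rec (m : ℕ) : ((m : ℤ) + 1) * A (m + 1) = 2 * (2 * m + 1) * A m := by
  rw [A_eq, A_eq]
  exact_mod_cast Nat.succ_mul_centralBinom_succ m

private lemma hA_cat (m : ℕ) : A m = ((m : ℤ) + 1) * Cat m := by
  rw [A_eq, Cat]
  exact_mod_cast (succ_mul_catalan_eq_centralBinom m).symm

private lemma A_zero : A 0 = 1 := by simp [A]
private lemma A_one : A 1 = 2 := by decide

/-- The WZ certificate function. -/
private def G (n k : ℕ) : ℤ := 2 * k * (-1) ^ k * A k * Cat (n - k)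

/-- Pointwise telescoping identity, stated with explicit `j = n - 1 - k`. -/
private lemma ptw (k j : ℕ) :
    ((k : ℤ) + j + 2) * ((-1) ^ k * A k * A (j + 2))
      - 16 * ((k : ℤ) + j + 1) * ((-1) ^ k * A k * A j)
    = 2 * ((k : ℤ) + 1) * (-1) ^ (k + 1) * A (k + 1) * Cat j
      - 2 * (k : ℤ) * (-1) ^ k * A k * Cat (j + 1) := by
  have hd : ((j : ℤ) + 2) * Cat (j + 1) = 2 * (2 * j + 1) * Cat j := by
    have h1 := hA_rec j
    have h2 := hA_cat j
    have h3 := hA_cat (j + 1)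
    have hj : ((j : ℤ) + 1) ≠ 0 := by positivity
    apply mul_left_cancel₀ hj
    push_cast at h1 h2 h3 ⊢
    nlinarith [h1, h2, h3]
  have hA2 : A (j + 2) = 2 * (2 * (j : ℤ) + 3) * Cat (j + 1) := by
    have h1 := hA_rec (j + 1)
    have h3 := hA_cat (j + 1)
    have hj : ((j : ℤ) + 2) ≠ 0 := by positivity
    apply mul_left_cancel₀ hj
    push_cast at h1 h3 ⊢
    nlinarith [h1, h3]
  have hAj : A j = ((j : ℤ) + 1) * Cat j := hA_cat j
  have hAk1 : ((k : ℤ) + 1) * A (k + 1) = 2 * (2 * k + 1) * A k := hA_rec k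
  have he : ((-1 : ℤ)) ^ (k + 1) = -(-1) ^ k := by rw [pow_succ]; ring
  have hj2 : ((j : ℤ) + 2) ≠ 0 := by positivity
  apply mul_left_cancel₀ hj2
  rw [he, hA2, hAj]
  linear_combination (2 * ((j : ℤ) + 2) * (-1 : ℤ) ^ k * Cat j) * hAk1
    + ((2 * ((k : ℤ) + j + 2) * (2 * j + 3) + 2 * k) * (-1 : ℤ) ^ k * A k) * hd

/-- The alternating convolution sum. -/
private def S (m : ℕ) : ℤ := ∑ k ∈ Finset.range (m + 1), (-1) ^ k * A k * A (m - k)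

private lemma key (n : ℕ) : ((n : ℤ) + 2) * S (n + 2) = 16 * ((n : ℤ) + 1) * S n := by
  have hsplit : S (n + 2) =
      (∑ k ∈ Finset.range (n + 1), (-1 : ℤ) ^ k * A k * A (n + 2 - k))
        + (-1) ^ (n + 1) * A (n + 1) * A 1 + (-1) ^ (n + 2) * A (n + 2) := by
    rw [S, Finset.sum_range_succ, Finset.sum_range_succ]
    simp only [show n + 2 - (n + 1) = 1 from by omega, Nat.sub_self]
    norm_num [A_zero]
  have htel : ∑ k ∈ Finset.range (n + 1),
      (((n : ℤ) + 2) * ((-1) ^ k * A k * A (n + 2 - k))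
        - 16 * ((n : ℤ) + 1) * ((-1) ^ k * A k * A (n - k)))
      = G (n + 1) (n + 1) - G (n + 1) 0 := by
    rw [← Finset.sum_range_sub (fun k => G (n + 1) k)]
    apply Finset.sum_congr rfl
    intro k hk
    rw [Finset.mem_range] at hk
    have hkn : k ≤ n := Nat.lt_succ_iff.mp hk
    obtain ⟨j, rfl⟩ : ∃ j, n = k + j := ⟨n - k, (Nat.add_sub_cancel' hkn).symm⟩
    have e1 : k + j + 2 - k = j + 2 := by omega
    have e2 : k + j - k = j := by omega
    have e3 : k + j + 1 - (k + 1) = j := by omega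
    have e4 : k + j + 1 - k = j + 1 := by omega
    rw [e1, e2]
    unfold G
    rw [e3, e4]
    have := ptw k j
    push_cast at this ⊢
    linarith [this]
  have hG0 : G (n + 1) 0 = 0 := by simp [G]
  have hGtop : G (n + 1) (n + 1) = 2 * ((n : ℤ) + 1) * (-1) ^ (n + 1) * A (n + 1) := by
    unfold G
    rw [Nat.sub_self]
    simp [Cat]
  have hrec : ((n : ℤ) + 2) * A (n + 2) = 2 * (2 * (n : ℤ) + 3) * A (n + 1) := by
    have h := hA_rec (n + 1)
    simp only [show n + 1 + 1 = n + 2 from rfl] at h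
    push_cast at h
    linarith [h]
  have hsum : ∑ k ∈ Finset.range (n + 1),
      (((n : ℤ) + 2) * ((-1) ^ k * A k * A (n + 2 - k))
        - 16 * ((n : ℤ) + 1) * ((-1) ^ k * A k * A (n - k)))
      = ((n : ℤ) + 2) * (∑ k ∈ Finset.range (n + 1), (-1 : ℤ) ^ k * A k * A (n + 2 - k))
        - 16 * ((n : ℤ) + 1) * S n := by
    rw [S, Finset.sum_sub_distrib, ← Finset.mul_sum, ← Finset.mul_sum]
  rw [hsplit]
  have h1 : ((n : ℤ) + 2) * (∑ k ∈ Finset.range (n + 1), (-1 : ℤ) ^ k * A k * A (n + 2 - k))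
      - 16 * ((n : ℤ) + 1) * S n
      = 2 * ((n : ℤ) + 1) * (-1) ^ (n + 1) * A (n + 1) := by
    rw [← hsum, htel, hG0, hGtop]; ring
  have hA1 : A 1 = 2 := A_one
  have hsgn : ((-1 : ℤ)) ^ (n + 2) = (-1) ^ n := by
    rw [pow_succ, pow_succ]; ring
  have hsgn1 : ((-1 : ℤ)) ^ (n + 1) = -(-1) ^ n := by rw [pow_succ]; ring
  rw [hA1, hsgn, hsgn1]
  rw [hsgn1] at h1
  linear_combination h1 + ((-1 : ℤ) ^ n) * hrec

private lemma S_even : ∀ m : ℕ, S (2 * m) = 4 ^ m * A m := by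
  intro m
  induction m with
  | zero => simp [S, A_zero]
  | succ m ih =>
    have hk := key (2 * m)
    have h2m : (2 * m + 2 : ℕ) = 2 * (m + 1) := by ring
    rw [h2m] at hk
    have hrec := hA_rec m
    have hne : ((2 * m : ℤ) + 2) ≠ 0 := by positivity
    apply mul_left_cancel₀ hne
    push_cast at hk hrec ⊢
    linear_combination hk + 16 * (2 * (m : ℤ) + 1) * ih + (-8 * (4 : ℤ) ^ m) * hrec

private lemma S_odd : ∀ m : ℕ, S (2 * m + 1) = 0 := by
  intro m
  induction m with
  | zero =>
    show S 1 = 0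
    simp [S, Finset.sum_range_succ, A_zero, A_one]
  | succ m ih =>
    have hk := key (2 * m + 1)
    have h2m : (2 * m + 1 + 2 : ℕ) = 2 * (m + 1) + 1 := by ring
    rw [h2m, ih] at hk
    have hne : ((2 * m + 1 : ℤ) + 2) ≠ 0 := by positivity
    apply mul_left_cancel₀ hne
    push_cast at hk ⊢
    rw [hk]; ring

theorem stmt1 :
    (∀ n : ℕ, ∑ k ∈ Finset.range (2 * n + 1),
        (-1 : ℤ) ^ k * Nat.choose (2 * k) k * Nat.choose (2 * (2 * n - k)) (2 * n - k)
        = 2 ^ (2 * n) * Nat.choose (2 * n) n) ∧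
    (∀ m : ℕ, Odd m → ∑ k ∈ Finset.range (m + 1),
        (-1 : ℤ) ^ k * Nat.choose (2 * k) k * Nat.choose (2 * (m - k)) (m - k) = 0) := by
  constructor
  · intro n
    have h := S_even n
    unfold S A at h
    rw [h]
    have : (2 : ℤ) ^ (2 * n) = 4 ^ n := by
      rw [pow_mul]; norm_num
    rw [this]
  · intro m hm
    obtain ⟨j, rfl⟩ := hm
    have h := S_odd j
    unfold S A at h
    convert h using 2
end

section
/- For all real p > 0 and all natural numbers n ≥ 1, ∑_{k=0}^{n} C(2n, 2k) · (Γ(2k+p)/Γ(p)) · (Γ(2n-2k+p)/Γ(p)) = (1/2) · (Γ(2p+2n)/Γ(2p) + Γ(n+p)·(2n)!/(Γ(p)·Γ(n+1))). -/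
/-!
With `Γ(p + k) / Γ(p) = (p)ₖ` (rising factorial), the left side is the even part
`½ ∑ⱼ (1 + (-1)ʲ) C(2n, j) (p)ⱼ (p)₂ₙ₋ⱼ`. The full sum is `(2p)₂ₙ` by Chu–Vandermonde. The
alternating sum is `(2n)!/n! · (p)ₙ`: both sides are polynomials in `p`, and at `p = -q`,
`q ∈ ℕ`, the identity is the coefficient of `X²ⁿ` in `(1 - X)^q (1 + X)^q = (1 - X²)^q`.
-/

open Finset Real Polynomial
open scoped Nat

theorem Real.Gamma_add_nat_div_Gamma_eq {n : ℕ} (x : ℝ) (hx : ∀ k : ℕ, x ≠ -k) :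
    Gamma (x + n) / Gamma x = (ascPochhammer ℝ n).eval x := by
  apply Complex.ofReal_injective
  push_cast [← Complex.Gamma_ofReal]
  rw [Complex.Gamma_add_nat_div_Gamma_eq _ (fun k h => hx k (by exact_mod_cast h)),
    ← ascPochhammer_map Complex.ofRealHom, ← Complex.ofRealHom_eq_coe, eval_map_apply]
  rfl

theorem two_mul_sum_range_even {R : Type*} [CommRing R] (f : ℕ → R) (n : ℕ) :
    2 * ∑ k ∈ range (n + 1), f (2 * k)
      = ∑ j ∈ range (2 * n + 1), f j + ∑ j ∈ range (2 * n + 1), (-1) ^ j * f j := by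
  induction n with
  | zero => simp; ring
  | succ n ih =>
    rw [show 2 * (n + 1) + 1 = 2 * n + 1 + 1 + 1 by ring]
    simp only [sum_range_succ _ (n + 1), sum_range_succ _ (2 * n + 1 + 1),
      sum_range_succ _ (2 * n + 1), mul_add, ih, pow_succ, pow_mul]
    ring

theorem descPochhammer_eval_neg {R : Type*} [CommRing R] (x : R) (k : ℕ) :
    (descPochhammer R k).eval (-x) = (-1) ^ k * (ascPochhammer R k).eval x := by
  rw [← neg_neg x, ascPochhammer_eval_neg_eq_descPochhammer, neg_neg, ← mul_assoc, ← mul_pow,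
    neg_one_mul, neg_neg, one_pow, one_mul]

theorem sum_choose_mul_ascPochhammer_eval {R : Type*} [CommRing R] (x y : R) (m : ℕ) :
    ∑ j ∈ range (m + 1), (m.choose j : R) * (ascPochhammer R j).eval x
        * (ascPochhammer R (m - j)).eval y
      = (ascPochhammer R m).eval (x + y) := by
  have h := Ring.descPochhammer_smeval_add m (Commute.all (-x) (-y))
  simp only [← aeval_eq_smeval, aeval_def, eval₂_eq_eval_map, descPochhammer_map, ← neg_add,
    descPochhammer_eval_neg, Nat.sum_antidiagonal_eq_sum_range_succ_mk] at h
  have hsq : (-1 : R) ^ m * (-1) ^ m = 1 := by rw [← mul_pow, neg_one_mul, neg_neg, one_pow]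
  calc _ = (-1) ^ m * ∑ j ∈ range (m + 1), (m.choose j : R) * ((-1) ^ j
          * (ascPochhammer R j).eval x * ((-1) ^ (m - j) * (ascPochhammer R (m - j)).eval y)) := by
        rw [mul_sum]
        refine sum_congr rfl fun j hj => ?_
        have hsign := pow_mul_pow_sub (-1 : R) (Nat.lt_succ_iff.mp (mem_range.mp hj))
        linear_combination (m.choose j : R) * (ascPochhammer R j).eval x
          * (ascPochhammer R (m - j)).eval y * (-(-1) ^ m * hsign - hsq)
    _ = _ := by rw [← h, ← mul_assoc, hsq, one_mul]

theorem coeff_one_sub_X_pow {R : Type*} [CommRing R] (q j : ℕ) :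
    ((1 - X : R[X]) ^ q).coeff j = (-1) ^ j * q.choose j := by
  rw [sub_eq_neg_add, add_pow, finsetSum_coeff]
  simp_rw [neg_pow (X : R[X]), one_pow, mul_one, ← C_eq_natCast, ← C_1, ← C_neg, ← C_pow,
    mul_right_comm _ (X ^ _), ← C_mul, coeff_C_mul_X_pow]
  rw [sum_ite_eq, ite_eq_left_iff, mem_range, not_lt]
  intro hj
  rw [Nat.choose_eq_zero_of_lt hj, Nat.cast_zero, mul_zero]

theorem sum_neg_one_pow_mul_choose_mul_choose {R : Type*} [CommRing R] (q n : ℕ) :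
    ∑ j ∈ range (2 * n + 1), (-1 : R) ^ j * q.choose j * q.choose (2 * n - j)
      = (-1) ^ n * q.choose n := by
  have h : (1 - X : R[X]) ^ q * (1 + X) ^ q = expand R 2 ((1 - X) ^ q) := by
    rw [← mul_pow, map_pow, map_sub, map_one, expand_X]; ring
  have h2n := congrArg (coeff · (n * 2)) h
  simp only [coeff_mul, Nat.sum_antidiagonal_eq_sum_range_succ_mk, coeff_one_sub_X_pow,
    coeff_one_add_X_pow, coeff_expand_mul two_pos] at h2n
  rwa [mul_comm n 2] at h2n

theorem Nat.choose_mul_descFactorial_mul_descFactorial {m j : ℕ} (hj : j ≤ m) (q : ℕ) :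
    m.choose j * (q.descFactorial j * q.descFactorial (m - j))
      = m ! * (q.choose j * q.choose (m - j)) := by
  rw [descFactorial_eq_factorial_mul_choose, descFactorial_eq_factorial_mul_choose,
    ← choose_mul_factorial_mul_factorial hj]
  ring

theorem sum_neg_one_pow_mul_choose_mul_ascPochhammer_mul (n : ℕ) :
    ∑ j ∈ range (2 * n + 1), (-1 : ℤ[X]) ^ j * ((2 * n).choose j : ℤ[X])
        * (ascPochhammer ℤ j * ascPochhammer ℤ (2 * n - j))
      = ((2 * n).descFactorial n : ℤ[X]) * ascPochhammer ℤ n := by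
  refine eq_of_infinite_eval_eq _ _ <| Set.infinite_of_injective_forall_mem
    (f := fun q : ℕ => -(q : ℤ)) (fun a b h => by simpa using h) fun q => ?_
  simp only [Set.mem_ofPred_eq, eval_finsetSum, eval_mul, eval_pow, eval_neg, eval_one,
    eval_natCast, ascPochhammer_eval_neg_eq_descPochhammer, descPochhammer_eval_eq_descFactorial]
  have hsign : ∀ j ≤ 2 * n, (-1 : ℤ) ^ j * (-1) ^ (2 * n - j) = 1 := fun j hj => by
    rw [pow_mul_pow_sub _ hj, pow_mul, neg_one_sq, one_pow]
  calc _ = ∑ j ∈ range (2 * n + 1),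
          ((2 * n)! : ℤ) * ((-1) ^ j * q.choose j * q.choose (2 * n - j)) := by
        refine sum_congr rfl fun j hj => ?_
        have hj := Nat.lt_succ_iff.mp (mem_range.mp hj)
        have h := congrArg (Nat.cast : ℕ → ℤ) (Nat.choose_mul_descFactorial_mul_descFactorial hj q)
        push_cast at h
        linear_combination (-1) ^ j * h + (-1) ^ j * ((2 * n).choose j : ℤ)
          * (q.descFactorial j * q.descFactorial (2 * n - j)) * hsign j hj
    _ = ((2 * n)! : ℤ) * ((-1) ^ n * q.choose n) := by
        rw [← mul_sum, sum_neg_one_pow_mul_choose_mul_choose]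
    _ = _ := by
        rw [← Nat.factorial_mul_descFactorial (show n ≤ 2 * n by omega),
          show 2 * n - n = n by omega, Nat.descFactorial_eq_factorial_mul_choose q n]
        push_cast
        ring

theorem sum_neg_one_pow_mul_choose_mul_ascPochhammer_eval {R : Type*} [CommRing R] (x : R)
    (n : ℕ) :
    ∑ j ∈ range (2 * n + 1), (-1) ^ j * ((2 * n).choose j : R) * (ascPochhammer R j).eval x
        * (ascPochhammer R (2 * n - j)).eval x
      = ((2 * n).descFactorial n : R) * (ascPochhammer R n).eval x := by
  simpa only [map_sum, map_mul, map_pow, map_neg, map_one, map_natCast, aeval_def,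
    eval₂_eq_eval_map, ascPochhammer_map, mul_assoc]
    using congrArg (aeval x) (sum_neg_one_pow_mul_choose_mul_ascPochhammer_mul n)

theorem stmt3_general (p : ℝ) (hp : 0 < p) (n : ℕ) :
    ∑ k ∈ Finset.range (n + 1),
        (Nat.choose (2 * n) (2 * k) : ℝ) * (Real.Gamma (2 * k + p) / Real.Gamma p)
          * (Real.Gamma (2 * (n : ℝ) - 2 * k + p) / Real.Gamma p)
      = (1 / 2) * (Real.Gamma (2 * p + 2 * n) / Real.Gamma (2 * p)
          + Real.Gamma (n + p) * (Nat.factorial (2 * n)) / (Real.Gamma p * Real.Gamma (n + 1))) := by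
  have hΓ : ∀ x : ℝ, 0 < x → ∀ k : ℕ, Gamma (x + k) / Gamma x = (ascPochhammer ℝ k).eval x :=
    fun x hx k => Gamma_add_nat_div_Gamma_eq x fun m hm => by
      linarith [(m.cast_nonneg : (0 : ℝ) ≤ m)]
  set f : ℕ → ℝ := fun j => (2 * n).choose j * (ascPochhammer ℝ j).eval p
    * (ascPochhammer ℝ (2 * n - j)).eval p
  have hterm : ∀ k ∈ range (n + 1), ((2 * n).choose (2 * k) : ℝ) * (Gamma (2 * k + p) / Gamma p)
      * (Gamma (2 * (n : ℝ) - 2 * k + p) / Gamma p) = f (2 * k) := fun k hk => by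
    have hkn : 2 * k ≤ 2 * n := by have := mem_range.mp hk; omega
    have e1 : 2 * (k : ℝ) + p = p + (2 * k : ℕ) := by push_cast; ring
    have e2 : 2 * (n : ℝ) - 2 * k + p = p + (2 * n - 2 * k : ℕ) := by
      rw [Nat.cast_sub hkn]; push_cast; ring
    rw [e1, e2, hΓ p hp, hΓ p hp]
  have hfull : Gamma (2 * p + 2 * n) / Gamma (2 * p) = ∑ j ∈ range (2 * n + 1), f j := by
    rw [sum_choose_mul_ascPochhammer_eval, ← two_mul, ← hΓ _ (by positivity)]
    push_cast; rfl
  have halt : Gamma (n + p) * (2 * n)! / (Gamma p * Gamma (n + 1))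
      = ∑ j ∈ range (2 * n + 1), (-1) ^ j * f j := by
    have hΓp := (Gamma_pos_of_pos hp).ne'
    simp only [f, ← mul_assoc]
    rw [sum_neg_one_pow_mul_choose_mul_ascPochhammer_eval, ← hΓ p hp, add_comm p,
      Gamma_nat_eq_factorial, ← Nat.factorial_mul_descFactorial (show n ≤ 2 * n by omega),
      show 2 * n - n = n by omega]
    push_cast
    field_simp
  rw [sum_congr rfl hterm, hfull, halt, ← two_mul_sum_range_even]
  ring

theorem stmt3 (p : ℝ) (hp : 0 < p) (n : ℕ) (hn : 1 ≤ n) :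
    ∑ k ∈ Finset.range (n + 1),
        (Nat.choose (2 * n) (2 * k) : ℝ) * (Real.Gamma (2 * k + p) / Real.Gamma p)
          * (Real.Gamma (2 * (n : ℝ) - 2 * k + p) / Real.Gamma p)
      = (1 / 2) * (Real.Gamma (2 * p + 2 * n) / Real.Gamma (2 * p)
          + Real.Gamma (n + p) * (Nat.factorial (2 * n)) / (Real.Gamma p * Real.Gamma (n + 1))) :=
  stmt3_general p hp n
end

section
/- For all natural numbers n, ∑_{k=0}^{n} C(4k, 2k) · C(4n-4k, 2n-2k) = 2^{4n-1} + 2^{2n-1} · C(2n, n). -/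
open Finset

private def bb (m : ℕ) : ℚ := (Nat.centralBinom m : ℚ)

private lemma bb_rec (j : ℕ) : ((j : ℚ) + 1) * bb (j + 1) = (4 * j + 2) * bb j := by
  have h : (((j + 1) * Nat.centralBinom (j + 1) : ℕ) : ℚ)
      = ((2 * (2 * j + 1) * Nat.centralBinom j : ℕ) : ℚ) := by
    exact_mod_cast congrArg (Nat.cast : ℕ → ℚ) (Nat.succ_mul_centralBinom_succ j)
  push_cast at h
  unfold bb
  linear_combination h

private def SS (m : ℕ) : ℚ := ∑ j ∈ Finset.range (m + 1), bb j * bb (m - j)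
private def WW (m : ℕ) : ℚ := ∑ j ∈ Finset.range (m + 1), (j : ℚ) * bb j * bb (m - j)
private def AA (m : ℕ) : ℚ := ∑ j ∈ Finset.range (m + 1), (-1 : ℚ) ^ j * bb j * bb (m - j)
private def VV (m : ℕ) : ℚ := ∑ j ∈ Finset.range (m + 1), (-1 : ℚ) ^ j * j * bb j * bb (m - j)

private lemma WW_reflect (m : ℕ) : 2 * WW m = m * SS m := by
  have h : WW m = ∑ j ∈ Finset.range (m + 1), ((m - j : ℕ) : ℚ) * bb (m - j) * bb j := by
    rw [WW, ← Finset.sum_range_reflect]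
    apply Finset.sum_congr rfl
    intro j hj
    rw [Finset.mem_range, Nat.lt_succ_iff] at hj
    rw [Nat.add_sub_cancel, Nat.sub_sub_self hj]
  rw [two_mul, SS, Finset.mul_sum]
  nth_rewrite 2 [h]
  rw [WW, ← Finset.sum_add_distrib]
  apply Finset.sum_congr rfl
  intro j hj
  rw [Finset.mem_range, Nat.lt_succ_iff] at hj
  rw [Nat.cast_sub hj]
  ring

private lemma AA_odd (m : ℕ) (hm : Odd m) : AA m = 0 := by
  have h : AA m = ∑ j ∈ Finset.range (m + 1), (-1 : ℚ) ^ (m - j) * bb (m - j) * bb j := by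
    rw [AA, ← Finset.sum_range_reflect]
    apply Finset.sum_congr rfl
    intro j hj
    rw [Finset.mem_range, Nat.lt_succ_iff] at hj
    rw [Nat.add_sub_cancel, Nat.sub_sub_self hj]
  have h2 : AA m = - AA m := by
    nth_rewrite 1 [h]
    rw [AA, ← Finset.sum_neg_distrib]
    apply Finset.sum_congr rfl
    intro j hj
    rw [Finset.mem_range, Nat.lt_succ_iff] at hj
    have hp : (-1 : ℚ) ^ (m - j) * (-1 : ℚ) ^ j = (-1 : ℚ) ^ m := by
      rw [← pow_add, Nat.sub_add_cancel hj]
    have hpm : (-1 : ℚ) ^ m = -1 := Odd.neg_one_pow hm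
    have hj2 : ((-1 : ℚ) ^ j) * ((-1 : ℚ) ^ j) = 1 := by
      rw [← pow_add, ← two_mul, pow_mul]; norm_num
    have ha : (-1 : ℚ) ^ (m - j) = (-1 : ℚ) ^ m * (-1 : ℚ) ^ j := by
      rw [← hp, mul_assoc, hj2, mul_one]
    rw [ha, hpm]; ring
  linarith

private lemma VV_reflect (m : ℕ) (hm : Even m) : 2 * VV m = m * AA m := by
  have h : VV m = ∑ j ∈ Finset.range (m + 1),
      (-1 : ℚ) ^ (m - j) * ((m - j : ℕ) : ℚ) * bb (m - j) * bb j := by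
    rw [VV, ← Finset.sum_range_reflect]
    apply Finset.sum_congr rfl
    intro j hj
    rw [Finset.mem_range, Nat.lt_succ_iff] at hj
    rw [Nat.add_sub_cancel, Nat.sub_sub_self hj]
  rw [two_mul, AA, Finset.mul_sum]
  nth_rewrite 2 [h]
  rw [VV, ← Finset.sum_add_distrib]
  apply Finset.sum_congr rfl
  intro j hj
  rw [Finset.mem_range, Nat.lt_succ_iff] at hj
  have hp : (-1 : ℚ) ^ (m - j) * (-1 : ℚ) ^ j = (-1 : ℚ) ^ m := by
    rw [← pow_add, Nat.sub_add_cancel hj]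
  have hpm : (-1 : ℚ) ^ m = 1 := Even.neg_one_pow hm
  have hj2 : ((-1 : ℚ) ^ j) * ((-1 : ℚ) ^ j) = 1 := by
    rw [← pow_add, ← two_mul, pow_mul]; norm_num
  have ha : (-1 : ℚ) ^ (m - j) = (-1 : ℚ) ^ m * (-1 : ℚ) ^ j := by
    rw [← hp, mul_assoc, hj2, mul_one]
  rw [ha, hpm, Nat.cast_sub hj]
  ring

private lemma WW_succ (m : ℕ) : WW (m + 1) = 4 * WW m + 2 * SS m := by
  rw [WW, Finset.sum_range_succ']
  simp only [Nat.cast_zero, zero_mul, add_zero]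
  rw [WW, SS, mul_comm (4 : ℚ), mul_comm (2 : ℚ), Finset.sum_mul, Finset.sum_mul,
    ← Finset.sum_add_distrib]
  apply Finset.sum_congr rfl
  intro i _
  have hidx : m + 1 - (i + 1) = m - i := by omega
  rw [hidx]
  push_cast
  have hb := bb_rec i
  linear_combination bb (m - i) * hb

private lemma VV_succ (m : ℕ) : VV (m + 1) = -4 * VV m - 2 * AA m := by
  rw [VV, Finset.sum_range_succ']
  simp only [Nat.cast_zero, mul_zero, zero_mul, add_zero]
  rw [VV, AA, mul_comm (-4 : ℚ), mul_comm (2 : ℚ), Finset.sum_mul, Finset.sum_mul,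
    sub_eq_add_neg, ← Finset.sum_neg_distrib, ← Finset.sum_add_distrib]
  apply Finset.sum_congr rfl
  intro i _
  have hidx : m + 1 - (i + 1) = m - i := by omega
  rw [hidx]
  push_cast
  have hb := bb_rec i
  have hpow : (-1 : ℚ) ^ (i + 1) = -(-1 : ℚ) ^ i := by rw [pow_succ]; ring
  rw [hpow]
  linear_combination (-(-1 : ℚ) ^ i * bb (m - i)) * hb

private lemma SS_val (m : ℕ) : SS m = 4 ^ m := by
  induction m with
  | zero => simp [SS, bb, Nat.centralBinom]
  | succ m ih =>
    have h1 := WW_reflect m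
    have h2 := WW_reflect (m + 1)
    have h3 := WW_succ m
    have hm : ((m : ℚ) + 1) ≠ 0 := by positivity
    have key : ((m : ℚ) + 1) * SS (m + 1) = ((m : ℚ) + 1) * (4 * SS m) := by
      push_cast at h2
      linear_combination -h2 + 2 * h3 + 4 * h1
    have := mul_left_cancel₀ hm key
    rw [this, ih]
    ring

private lemma AA_even (n : ℕ) : AA (2 * n) = 4 ^ n * bb n := by
  induction n with
  | zero => simp [AA, bb, Nat.centralBinom]
  | succ n ih =>
    have hV2 := VV_reflect (2 * n) ⟨n, by ring⟩
    have hidx : 2 * (n + 1) = (2 * n + 1) + 1 := by ring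
    have hV2' := VV_reflect (2 * (n + 1)) ⟨n + 1, by ring⟩
    have hs1 := VV_succ (2 * n)
    have hs2 := VV_succ (2 * n + 1)
    have hAodd := AA_odd (2 * n + 1) ⟨n, by ring⟩
    rw [hidx]
    have hb := bb_rec n
    rw [hidx] at hV2'
    push_cast at hV2' hV2
    have hgoal : ((n : ℚ) + 1) * AA ((2 * n + 1) + 1)
        = ((n : ℚ) + 1) * (4 ^ (n + 1) * bb (n + 1)) := by
      have hA : ((n : ℚ) + 1) * AA ((2 * n + 1) + 1) = 8 * (2 * n + 1) * AA (2 * n) := by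
        linear_combination (-1/2 : ℚ) * hV2' + hs2 - 4 * hs1 - 2 * hAodd + 8 * hV2
      rw [hA, ih]
      linear_combination (-(4 : ℚ) ^ (n + 1)) * hb
    have hm : ((n : ℚ) + 1) ≠ 0 := by positivity
    exact mul_left_cancel₀ hm hgoal

private lemma split_sum (g : ℕ → ℚ) (n : ℕ) :
    ∑ j ∈ Finset.range (2 * n + 2), g j
      = ∑ i ∈ Finset.range (n + 1), g (2 * i) + ∑ i ∈ Finset.range (n + 1), g (2 * i + 1) := by
  induction n with
  | zero => simp [Finset.sum_range_succ]
  | succ n ih =>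
    have h : 2 * (n + 1) + 2 = (2 * n + 2) + 1 + 1 := by ring
    have e2 : 2 * (n + 1) + 1 = (2 * n + 2) + 1 := by ring
    have e1 : 2 * (n + 1) = (2 * n + 2) := by ring
    rw [h, Finset.sum_range_succ, Finset.sum_range_succ, ih,
      Finset.sum_range_succ (fun i => g (2 * i)) (n + 1),
      Finset.sum_range_succ (fun i => g (2 * i + 1)) (n + 1), e2, e1]
    ring

private lemma key_eq (n : ℕ) :
    2 * (∑ k ∈ Finset.range (n + 1), bb (2 * k) * bb (2 * (n - k)))
      = SS (2 * n) + AA (2 * n) := by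
  have hcomb : SS (2 * n) + AA (2 * n)
      = ∑ j ∈ Finset.range (2 * n + 1), (1 + (-1 : ℚ) ^ j) * bb j * bb (2 * n - j) := by
    rw [SS, AA, ← Finset.sum_add_distrib]
    apply Finset.sum_congr rfl
    intro j _
    ring
  have hzero : (1 + (-1 : ℚ) ^ (2 * n + 1)) * bb (2 * n + 1) * bb (2 * n - (2 * n + 1)) = 0 := by
    have : (-1 : ℚ) ^ (2 * n + 1) = -1 := Odd.neg_one_pow ⟨n, by ring⟩
    rw [this]; ring
  have hext : SS (2 * n) + AA (2 * n)
      = ∑ j ∈ Finset.range (2 * n + 2), (1 + (-1 : ℚ) ^ j) * bb j * bb (2 * n - j) := by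
    rw [Finset.sum_range_succ, hzero, add_zero, hcomb]
  rw [hext, split_sum (fun j => (1 + (-1 : ℚ) ^ j) * bb j * bb (2 * n - j)) n]
  have hodd : ∑ i ∈ Finset.range (n + 1),
      (1 + (-1 : ℚ) ^ (2 * i + 1)) * bb (2 * i + 1) * bb (2 * n - (2 * i + 1)) = 0 := by
    apply Finset.sum_eq_zero
    intro i _
    have : (-1 : ℚ) ^ (2 * i + 1) = -1 := Odd.neg_one_pow ⟨i, by ring⟩
    rw [this]; ring
  rw [hodd, add_zero, Finset.mul_sum]
  apply Finset.sum_congr rfl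
  intro k hk
  rw [Finset.mem_range, Nat.lt_succ_iff] at hk
  have h1 : (-1 : ℚ) ^ (2 * k) = 1 := Even.neg_one_pow ⟨k, by ring⟩
  have h2 : 2 * n - 2 * k = 2 * (n - k) := by omega
  rw [h1, h2]
  ring

theorem stmt5 (n : ℕ) (hn : 1 ≤ n) :
    ∑ k ∈ Finset.range (n + 1),
        Nat.choose (4 * k) (2 * k) * Nat.choose (4 * (n - k)) (2 * (n - k))
      = 2 ^ (4 * n - 1) + 2 ^ (2 * n - 1) * Nat.choose (2 * n) n := by
  have hchoose : ∀ m : ℕ, Nat.choose (4 * m) (2 * m) = Nat.centralBinom (2 * m) := by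
    intro m
    rw [Nat.centralBinom]
    congr 1
    ring
  have hQ : (2 : ℚ) * (∑ k ∈ Finset.range (n + 1),
      ((Nat.choose (4 * k) (2 * k) * Nat.choose (4 * (n - k)) (2 * (n - k)) : ℕ) : ℚ))
      = 2 * ((2 ^ (4 * n - 1) + 2 ^ (2 * n - 1) * Nat.choose (2 * n) n : ℕ) : ℚ) := by
    have hL : ∑ k ∈ Finset.range (n + 1),
        ((Nat.choose (4 * k) (2 * k) * Nat.choose (4 * (n - k)) (2 * (n - k)) : ℕ) : ℚ)
        = ∑ k ∈ Finset.range (n + 1), bb (2 * k) * bb (2 * (n - k)) := by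
      apply Finset.sum_congr rfl
      intro k _
      rw [hchoose, hchoose]
      push_cast [bb]
      ring
    rw [hL, key_eq, SS_val, AA_even]
    obtain ⟨a, ha⟩ : ∃ a, 4 * n = a + 1 := ⟨4 * n - 1, by omega⟩
    obtain ⟨c, hc⟩ : ∃ c, 2 * n = c + 1 := ⟨2 * n - 1, by omega⟩
    have h4 : (4 : ℚ) ^ (2 * n) = 2 ^ (4 * n) := by
      rw [show (4 : ℚ) = 2 ^ 2 by norm_num, ← pow_mul]
      congr 1
      ring
    have h4' : (4 : ℚ) ^ n = 2 ^ (2 * n) := by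
      rw [show (4 : ℚ) = 2 ^ 2 by norm_num, ← pow_mul]
    rw [h4, h4', bb, Nat.centralBinom]
    rw [show 4 * n - 1 = a by omega, show 2 * n - 1 = c by omega, ha, hc]
    push_cast
    ring
  have hQ' : (∑ k ∈ Finset.range (n + 1),
      ((Nat.choose (4 * k) (2 * k) * Nat.choose (4 * (n - k)) (2 * (n - k)) : ℕ) : ℚ))
      = ((2 ^ (4 * n - 1) + 2 ^ (2 * n - 1) * Nat.choose (2 * n) n : ℕ) : ℚ) :=
    mul_left_cancel₀ (by norm_num) hQ
  exact_mod_cast hQ'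
end

section
/- For all real p > 0 and all natural numbers n ≥ 1, ∑_{k=0}^{2n} (-2)^k · C(2n, k) · B(p+k, p)/B(p, p) = B(n + 1/2, p) / B(1/2, p). -/
open Finset Real

noncomputable def B (a b : ℝ) : ℝ := Real.Gamma a * Real.Gamma b / Real.Gamma (a + b)

lemma B_pos {a b : ℝ} (ha : 0 < a) (hb : 0 < b) : 0 < B a b := by
  unfold B
  have h1 := Real.Gamma_pos_of_pos ha
  have h2 := Real.Gamma_pos_of_pos hb
  have h3 := Real.Gamma_pos_of_pos (add_pos ha hb)
  positivity

lemma pascal_sum (f : ℕ → ℝ) (m : ℕ) :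
    ∑ k ∈ Finset.range (m + 2), (-2:ℝ)^k * ((m+1).choose k : ℝ) * f k
      = ∑ k ∈ Finset.range (m + 1), (-2:ℝ)^k * (m.choose k : ℝ) * f k
        - 2 * ∑ k ∈ Finset.range (m + 1), (-2:ℝ)^k * (m.choose k : ℝ) * f (k+1) := by
  have e1 : ∑ k ∈ Finset.range (m + 2), (-2:ℝ)^k * ((m+1).choose k : ℝ) * f k
      = (∑ k ∈ Finset.range (m+1), (-2:ℝ)^(k+1) * (((m+1).choose (k+1)) : ℝ) * f (k+1)) + f 0 := by
    rw [Finset.sum_range_succ']; simp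
  have e2 : ∑ k ∈ Finset.range (m + 1), (-2:ℝ)^k * (m.choose k : ℝ) * f k
      = (∑ k ∈ Finset.range (m+1), (-2:ℝ)^(k+1) * ((m.choose (k+1)) : ℝ) * f (k+1)) + f 0 := by
    have h := Finset.sum_range_succ' (fun k => (-2:ℝ)^k * (m.choose k : ℝ) * f k) (m+1)
    rw [Finset.sum_range_succ] at h
    simp only [Nat.choose_succ_self, Nat.cast_zero, mul_zero, zero_mul, add_zero,
      Nat.choose_zero_right, Nat.cast_one, pow_zero, mul_one, one_mul] at h
    exact h
  rw [e1, e2]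
  have key : ∀ k ∈ Finset.range (m+1), (-2:ℝ)^(k+1) * ((m+1).choose (k+1) : ℝ) * f (k+1)
      = (-2:ℝ)^(k+1) * (m.choose (k+1) : ℝ) * f (k+1)
        - 2 * ((-2:ℝ)^k * (m.choose k : ℝ) * f (k+1)) := by
    intro k _
    rw [Nat.choose_succ_succ]
    push_cast
    ring
  rw [Finset.sum_congr rfl key, Finset.sum_sub_distrib, ← Finset.mul_sum]
  ring

lemma key_step (p : ℝ) (hp : 0 < p) (r : ℕ → ℝ)
    (hr : ∀ k : ℕ, (2*p + k) * r (k+1) = (p + k) * r k) (n : ℕ) :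
    (2*p + 2*n + 1) * ∑ k ∈ Finset.range (2*(n+1)+1), (-2:ℝ)^k * ((2*(n+1)).choose k : ℝ) * r k
      = (2*n + 1) * ∑ k ∈ Finset.range (2*n+1), (-2:ℝ)^k * ((2*n).choose k : ℝ) * r k := by
  have h1 : (2*(n+1)+1) = (2*n+1) + 2 := by ring
  have h2 : (2*(n+1)) = (2*n+1) + 1 := by ring
  rw [h1, h2, pascal_sum r (2*n+1)]
  have h3 : (2*n+1) + 1 = (2*n) + 2 := by ring
  have h4 : (2*n+1) = (2*n) + 1 := rfl
  rw [h3, h4, pascal_sum r (2*n), pascal_sum (fun k => r (k+1)) (2*n)]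
  -- now everything over range (2*n+1), with terms r k, r (k+1), r (k+2)
  set T0 := ∑ k ∈ Finset.range (2*n+1), (-2:ℝ)^k * ((2*n).choose k : ℝ) * r k with hT0
  set T1 := ∑ k ∈ Finset.range (2*n+1), (-2:ℝ)^k * ((2*n).choose k : ℝ) * r (k+1) with hT1
  set T2 := ∑ k ∈ Finset.range (2*n+1), (-2:ℝ)^k * ((2*n).choose k : ℝ) * (r (k+1+1)) with hT2
  -- goal: (2p+2n+1) * (T0 - 2T1 - 2*(T1 - 2*T2)) = (2n+1) * T0
  have key : (2*p + 2*n + 1) * (T0 - 4*T1 + 4*T2) - (2*n+1) * T0 = 0 := by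
    set g : ℕ → ℝ := fun k => (-2:ℝ)^k * ((2*n).choose k : ℝ) * k * r k / (2*p + k) with hg
    have term : ∀ k ∈ Finset.range (2*n+1),
        (2*p + 2*n + 1) * ((-2:ℝ)^k * ((2*n).choose k : ℝ) * r k
            - 4*((-2:ℝ)^k * ((2*n).choose k : ℝ) * r (k+1))
            + 4*((-2:ℝ)^k * ((2*n).choose k : ℝ) * r (k+1+1)))
          - (2*n+1) * ((-2:ℝ)^k * ((2*n).choose k : ℝ) * r k)
          = 2*p * (g (k+1) - g k) := by
      intro k hk
      rw [Finset.mem_range] at hk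
      have hk' : k ≤ 2*n := Nat.lt_succ_iff.mp hk
      have hd0 : (2*p + (k:ℝ)) ≠ 0 := by positivity
      have hd1 : (2*p + (k:ℝ) + 1) ≠ 0 := by positivity
      have hk1 : ((k:ℝ) + 1) ≠ 0 := by positivity
      have hR1 : r (k+1) = (p + k) * r k / (2*p + k) := by
        field_simp
        linarith [hr k]
      have hR2 : r (k+1+1) = (p + (k+1)) * r (k+1) / (2*p + k + 1) := by
        have := hr (k+1)
        push_cast at this
        field_simp
        linarith [this]
      have hc : ((2*n).choose (k+1) : ℝ) = ((2*n).choose k : ℝ) * (2*(n:ℝ) - k) / ((k:ℝ)+1) := by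
        have := Nat.choose_succ_right_eq (2*n) k
        have hcast : (((2*n).choose (k+1) * (k+1) : ℕ) : ℝ) = (((2*n).choose k * (2*n - k) : ℕ) : ℝ) := by
          exact_mod_cast congrArg Nat.cast this
        push_cast [Nat.cast_sub hk'] at hcast
        field_simp
        linarith [hcast]
      simp only [hg]
      rw [hR2, hR1, hc]
      push_cast
      field_simp
      ring
    have sum_eq : ∑ k ∈ Finset.range (2*n+1),
        ((2*p + 2*n + 1) * ((-2:ℝ)^k * ((2*n).choose k : ℝ) * r k
            - 4*((-2:ℝ)^k * ((2*n).choose k : ℝ) * r (k+1))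
            + 4*((-2:ℝ)^k * ((2*n).choose k : ℝ) * r (k+1+1)))
          - (2*n+1) * ((-2:ℝ)^k * ((2*n).choose k : ℝ) * r k))
        = ∑ k ∈ Finset.range (2*n+1), 2*p * (g (k+1) - g k) :=
      Finset.sum_congr rfl term
    have tele : ∑ k ∈ Finset.range (2*n+1), (g (k+1) - g k) = g (2*n+1) - g 0 :=
      Finset.sum_range_sub g (2*n+1)
    have hgtop : g (2*n+1) = 0 := by
      simp [hg, Nat.choose_succ_self]
    have hg0 : g 0 = 0 := by simp [hg]
    calc (2*p + 2*n + 1) * (T0 - 4*T1 + 4*T2) - (2*n+1) * T0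
        = ∑ k ∈ Finset.range (2*n+1),
            ((2*p + 2*n + 1) * ((-2:ℝ)^k * ((2*n).choose k : ℝ) * r k
              - 4*((-2:ℝ)^k * ((2*n).choose k : ℝ) * r (k+1))
              + 4*((-2:ℝ)^k * ((2*n).choose k : ℝ) * r (k+1+1)))
            - (2*n+1) * ((-2:ℝ)^k * ((2*n).choose k : ℝ) * r k)) := by
          simp only [hT0, hT1, hT2, Finset.mul_sum, ← Finset.sum_sub_distrib,
            ← Finset.sum_add_distrib]
      _ = ∑ k ∈ Finset.range (2*n+1), 2*p * (g (k+1) - g k) := sum_eq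
      _ = 2*p * (g (2*n+1) - g 0) := by rw [← Finset.mul_sum, tele]
      _ = 0 := by rw [hgtop, hg0]; ring
  linarith [key]

lemma main_lemma (p : ℝ) (hp : 0 < p) (r : ℕ → ℝ) (hr0 : r 0 = 1)
    (hr : ∀ k : ℕ, (2*p + k) * r (k+1) = (p + k) * r k) (n : ℕ) :
    ∑ k ∈ Finset.range (2*n+1), (-2:ℝ)^k * ((2*n).choose k : ℝ) * r k
      = ∏ j ∈ Finset.range n, ((2*(j:ℝ)+1)/(2*p+2*j+1)) := by
  induction n with
  | zero => simp [hr0]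
  | succ n ih =>
    have hd : (2*p + 2*(n:ℝ) + 1) ≠ 0 := by positivity
    have h := key_step p hp r hr n
    rw [Finset.prod_range_succ, ← ih]
    field_simp
    linear_combination h

lemma r_rec (p : ℝ) (hp : 0 < p) (k : ℕ) :
    (2*p + k) * (B (p + (k+1:ℕ)) p / B p p) = (p + k) * (B (p + k) p / B p p) := by
  have hpk : (0:ℝ) < p + k := by positivity
  have h2pk : (0:ℝ) < 2*p + k := by positivity
  have hG1 : Real.Gamma (p + (k+1:ℕ)) = (p + k) * Real.Gamma (p + k) := by
    push_cast
    rw [show p + ((k:ℝ)+1) = (p + k) + 1 by ring, Real.Gamma_add_one (ne_of_gt hpk)]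
  have hG2 : Real.Gamma ((p + (k+1:ℕ)) + p) = (2*p + k) * Real.Gamma ((p + k) + p) := by
    push_cast
    rw [show p + ((k:ℝ)+1) + p = ((p + k) + p) + 1 by ring,
      Real.Gamma_add_one (ne_of_gt (by positivity)), show (p+(k:ℝ))+p = 2*p+k by ring]
  unfold B
  rw [hG1, hG2]
  have hg1 : Real.Gamma (p + k) ≠ 0 := ne_of_gt (Real.Gamma_pos_of_pos hpk)
  have hg2 : Real.Gamma p ≠ 0 := ne_of_gt (Real.Gamma_pos_of_pos hp)
  have hg3 : Real.Gamma ((p + k) + p) ≠ 0 := ne_of_gt (Real.Gamma_pos_of_pos (by positivity))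
  have hg4 : Real.Gamma (p + p) ≠ 0 := ne_of_gt (Real.Gamma_pos_of_pos (by positivity))
  field_simp

lemma rhs_prod (p : ℝ) (hp : 0 < p) (n : ℕ) :
    B ((n:ℝ) + 1/2) p / B (1/2) p = ∏ j ∈ Finset.range n, ((2*(j:ℝ)+1)/(2*p+2*j+1)) := by
  induction n with
  | zero =>
    simp only [Nat.cast_zero, zero_add, Finset.range_zero, Finset.prod_empty]
    exact div_self (ne_of_gt (B_pos (by norm_num) hp))
  | succ n ih =>
    have hn2 : (0:ℝ) < (n:ℝ) + 1/2 := by positivity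
    have hG1 : Real.Gamma (((n:ℕ)+1:ℕ) + 1/2) = ((n:ℝ) + 1/2) * Real.Gamma ((n:ℝ) + 1/2) := by
      push_cast
      rw [show (n:ℝ) + 1 + 1/2 = ((n:ℝ) + 1/2) + 1 by ring, Real.Gamma_add_one (ne_of_gt hn2)]
    have hG2 : Real.Gamma ((((n:ℕ)+1:ℕ) + 1/2) + p)
        = ((n:ℝ) + 1/2 + p) * Real.Gamma (((n:ℝ) + 1/2) + p) := by
      push_cast
      rw [show (n:ℝ) + 1 + 1/2 + p = (((n:ℝ) + 1/2) + p) + 1 by ring,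
        Real.Gamma_add_one (ne_of_gt (by positivity))]
    rw [Finset.prod_range_succ, ← ih]
    unfold B
    push_cast at hG1 hG2 ⊢
    rw [hG1, hG2]
    have hg1 : Real.Gamma ((n:ℝ) + 1/2) ≠ 0 := ne_of_gt (Real.Gamma_pos_of_pos hn2)
    have hg2 : Real.Gamma p ≠ 0 := ne_of_gt (Real.Gamma_pos_of_pos hp)
    have hg3 : Real.Gamma (((n:ℝ) + 1/2) + p) ≠ 0 :=
      ne_of_gt (Real.Gamma_pos_of_pos (by positivity))
    have hg4 : Real.Gamma ((1:ℝ)/2) ≠ 0 := ne_of_gt (Real.Gamma_pos_of_pos (by norm_num))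
    have hg5 : Real.Gamma ((1:ℝ)/2 + p) ≠ 0 := ne_of_gt (Real.Gamma_pos_of_pos (by positivity))
    have hd1 : (n:ℝ) + 1/2 + p ≠ 0 := by positivity
    have hd2 : 2*p + 2*(n:ℝ) + 1 ≠ 0 := by positivity
    field_simp
    ring

theorem stmt7 (p : ℝ) (hp : 0 < p) (n : ℕ) (hn : 1 ≤ n) :
    ∑ k ∈ Finset.range (2 * n + 1),
        (-2 : ℝ) ^ k * (Nat.choose (2 * n) k : ℝ) * (B (p + k) p / B p p)
      = B (n + 1 / 2) p / B (1 / 2) p := by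
  have hr0 : B (p + (0:ℕ)) p / B p p = 1 := by
    simp only [Nat.cast_zero, add_zero]
    exact div_self (ne_of_gt (B_pos hp hp))
  have h := main_lemma p hp (fun k => B (p + k) p / B p p) hr0
    (fun k => r_rec p hp k) n
  rw [h, rhs_prod p hp n]
end

section
/- For all natural numbers n ≥ 1, ∑_{k=0}^{2n} (-1)^k · C(2n, k) · C(2k, k) / 2^k = C(2n, n) / 4^n. -/
/-!
Both sides are the coefficient of `X ^ (2n)` in `(X - (X + 1) ^ 2 / 2) ^ (2n)`. Expanding
binomially in the two summands, the `k`-th term `C(2n, k) (-1/2)^k (X + 1)^(2k) X^(2n-k)`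
contributes `C(2n, k) (-1/2)^k C(2k, k)`. On the other hand `X - (X + 1) ^ 2 / 2 = -(X ^ 2 + 1) / 2`,
and the coefficient of `X ^ (2n)` in `(X ^ 2 + 1) ^ (2n)` is `C(2n, n)`.
-/

open Finset Polynomial

theorem coeff_X_add_C_mul_X_add_one_sq_pow {R : Type*} [CommRing R] (a : R) (m : ℕ) :
    ((X + C a * (X + 1) ^ 2) ^ m).coeff m
      = ∑ k ∈ range (m + 1), a ^ k * m.choose k * (2 * k).choose k := by
  rw [add_comm, add_pow, finsetSum_coeff]
  refine sum_congr rfl fun k hk => ?_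
  obtain ⟨j, rfl⟩ := Nat.exists_eq_add_of_le (Nat.lt_succ_iff.mp (mem_range.mp hk))
  have hterm : (C a * (X + 1) ^ 2) ^ k * X ^ (k + j - k) * ((k + j).choose k : R[X])
      = C (a ^ k * (k + j).choose k) * ((X + 1) ^ (2 * k) * X ^ j) := by
    rw [Nat.add_sub_cancel_left, mul_pow, ← pow_mul, C_mul, C_pow, ← C_eq_natCast]
    ring
  rw [hterm, coeff_C_mul, coeff_mul_X_pow, coeff_X_add_one_pow]

theorem coeff_X_sq_add_one_pow (R : Type*) [CommSemiring R] (m j : ℕ) :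
    ((X ^ 2 + 1 : R[X]) ^ m).coeff (2 * j) = m.choose j := by
  rw [show (X ^ 2 + 1 : R[X]) = expand R 2 (X + 1) by simp, ← map_pow, coeff_expand_mul' two_pos,
    coeff_X_add_one_pow]

theorem stmt9_general (n : ℕ) :
    ∑ k ∈ Finset.range (2 * n + 1),
        (-1 : ℚ) ^ k * (Nat.choose (2 * n) k : ℚ) * (Nat.choose (2 * k) k : ℚ) / 2 ^ k
      = (Nat.choose (2 * n) n : ℚ) / 4 ^ n := by
  have hC : C (-1 / 2 : ℚ) * 2 = -1 := by
    rw [← map_ofNat C 2, ← C_mul]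
    norm_num
  have hbase : X + C (-1 / 2 : ℚ) * (X + 1) ^ 2 = C (-1 / 2) * (X ^ 2 + 1) := by
    linear_combination X * hC
  have hcoeff := congrArg (coeff · (2 * n)) (congrArg (· ^ (2 * n)) hbase)
  simp only [coeff_X_add_C_mul_X_add_one_sq_pow, mul_pow, ← C_pow, coeff_C_mul,
    coeff_X_sq_add_one_pow] at hcoeff
  convert hcoeff using 1
  · exact sum_congr rfl fun k _ => by rw [div_pow]; ring
  · rw [pow_mul, show (-1 / 2 : ℚ) ^ 2 = 1 / 4 by norm_num, div_pow, one_pow]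
    ring

theorem stmt9 (n : ℕ) (hn : 1 ≤ n) :
    ∑ k ∈ Finset.range (2 * n + 1),
        (-1 : ℚ) ^ k * (Nat.choose (2 * n) k : ℚ) * (Nat.choose (2 * k) k : ℚ) / 2 ^ k
      = (Nat.choose (2 * n) n : ℚ) / 4 ^ n :=
  stmt9_general n
end

section
/- For all natural numbers n ≥ 1, ∑_{k=0}^{2n} (-1)^k · C(2n, k) · C(2k, k) · 2^{2n-k} = C(2n, n). -/
open Finset Polynomial

theorem stmt10 (n : ℕ) (hn : 1 ≤ n) :
    ∑ k ∈ Finset.range (2 * n + 1),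
        (-1 : ℤ) ^ k * Nat.choose (2 * n) k * Nat.choose (2 * k) k * 2 ^ (2 * n - k)
      = Nat.choose (2 * n) n := by
  have key : ∀ k ∈ Finset.range (2 * n + 1),
      ((-(1 + X : ℤ[X]) ^ 2) ^ k * (2 * X) ^ (2 * n - k) *
          (Nat.choose (2 * n) k : ℤ[X])).coeff (2 * n)
        = (-1 : ℤ) ^ k * Nat.choose (2 * n) k * Nat.choose (2 * k) k * 2 ^ (2 * n - k) := by
    intro k hk
    have hk' : k ≤ 2 * n := Nat.lt_succ_iff.mp (mem_range.mp hk)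
    have h1 : ((-(1 + X : ℤ[X]) ^ 2) ^ k * (2 * X) ^ (2 * n - k) *
          (Nat.choose (2 * n) k : ℤ[X]))
        = C ((-1 : ℤ) ^ k * Nat.choose (2 * n) k * 2 ^ (2 * n - k)) *
          (X ^ (2 * n - k) * (1 + X) ^ (2 * k)) := by
      rw [neg_pow, ← pow_mul]
      simp only [map_mul, map_pow, map_neg, map_one, map_ofNat, C_eq_natCast]
      ring
    rw [h1, coeff_C_mul]
    have h2 : 2 * n = k + (2 * n - k) := (Nat.add_sub_cancel' hk').symm
    rw [h2, Nat.add_sub_cancel_left, coeff_X_pow_mul, coeff_one_add_X_pow]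
    ring
  calc ∑ k ∈ Finset.range (2 * n + 1),
        (-1 : ℤ) ^ k * Nat.choose (2 * n) k * Nat.choose (2 * k) k * 2 ^ (2 * n - k)
      = ((-(1 + X : ℤ[X]) ^ 2 + 2 * X) ^ (2 * n)).coeff (2 * n) := by
        rw [add_pow, finset_sum_coeff]
        exact (Finset.sum_congr rfl key).symm
    _ = ((1 + X ^ 2 : ℤ[X]) ^ (2 * n)).coeff (2 * n) := by
        have h : (-(1 + X : ℤ[X]) ^ 2 + 2 * X) = -(1 + X ^ 2) := by ring
        rw [h, Even.neg_pow (even_two_mul n)]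
    _ = (Nat.choose (2 * n) n : ℤ) := by
        have h : ((1 + X ^ 2 : ℤ[X]) ^ (2 * n)) = expand ℤ 2 ((1 + X) ^ (2 * n)) := by
          simp [map_pow, map_add, expand_X]
        rw [h, coeff_expand_mul' (by norm_num), coeff_one_add_X_pow]
end

section
/- For all natural numbers n ≥ 1, ∑_{k=0}^{2n} (-1)^k · C(2n, k) · C(2k, k) · C(4n-2k, 2n-k) = C(2n, n)². -/
open Finset

private def fq (n k : ℕ) : ℚ :=
  (-1 : ℚ) ^ k * Nat.choose (2 * n) k * Nat.choose (2 * k) k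
    * Nat.choose (2 * (2 * n - k)) (2 * n - k)

private def gq (n k : ℕ) : ℚ :=
  (-2 * (k : ℚ) ^ 2 * (4 * (n : ℚ) - 2 * k + 1) * (2 * (n : ℚ) + 1)
      * (8 * (n : ℚ) ^ 2 - 6 * (k : ℚ) * n + 13 * n + (k : ℚ) ^ 2 - 5 * k + 5))
    / ((2 * (n : ℚ) - k + 1) ^ 2 * (2 * (n : ℚ) - k + 2) ^ 2) * fq n k

private lemma cb_succ (m : ℕ) :
    ((m : ℚ) + 1) * Nat.choose (2 * (m + 1)) (m + 1) = 2 * (2 * m + 1) * Nat.choose (2 * m) m := by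
  have := Nat.succ_mul_centralBinom_succ m
  simp only [Nat.centralBinom] at this
  exact_mod_cast this

set_option maxHeartbeats 1000000 in
private lemma term_id (n k : ℕ) (hk : k < 2 * n) :
    ((n : ℚ) + 1) ^ 2 * fq (n + 1) k - 4 * (2 * (n : ℚ) + 1) ^ 2 * fq n k
      = gq n (k + 1) - gq n k := by
  obtain ⟨m, hm⟩ : ∃ m, 2 * n = k + (m + 1) := ⟨2 * n - k - 1, by omega⟩
  have h1 : 2 * n - k = m + 1 := by omega
  have h2 : 2 * n - (k + 1) = m := by omega
  have h3 : 2 * (n + 1) - k = m + 3 := by omega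
  have hn' : (n : ℚ) = ((k : ℚ) + m + 1) / 2 := by
    have h' : ((2 * n : ℕ) : ℚ) = ((k + (m + 1) : ℕ) : ℚ) := by rw [hm]
    push_cast at h'; linarith
  have hc0 : ((m : ℚ) + 1) * Nat.choose (2 * (m + 1)) (m + 1)
      = 2 * (2 * m + 1) * Nat.choose (2 * m) m := cb_succ m
  have hc2 : ((m : ℚ) + 2) * Nat.choose (2 * (m + 2)) (m + 2)
      = 2 * (2 * m + 3) * Nat.choose (2 * (m + 1)) (m + 1) := by
    have := cb_succ (m + 1); push_cast at this ⊢; linarith [this]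
  have hc3 : ((m : ℚ) + 3) * Nat.choose (2 * (m + 3)) (m + 3)
      = 2 * (2 * m + 5) * Nat.choose (2 * (m + 2)) (m + 2) := by
    have := cb_succ (m + 2); push_cast at this ⊢; linarith [this]
  have hb : ((k : ℚ) + 1) * Nat.choose (2 * (k + 1)) (k + 1)
      = 2 * (2 * k + 1) * Nat.choose (2 * k) k := cb_succ k
  have ha2 : (Nat.choose (2 * n) (k + 1) : ℚ) * (k + 1)
      = Nat.choose (2 * n) k * (m + 1) := by
    have := Nat.choose_succ_right_eq (2 * n) k
    rw [h1] at this; exact_mod_cast this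
  have ha1 : (Nat.choose (2 * n + 1) k : ℚ) * (m + 2)
      = Nat.choose (2 * n) k * (2 * n + 1) := by
    have := Nat.choose_mul_succ_eq (2 * n) k
    have hs : 2 * n + 1 - k = m + 2 := by omega
    rw [hs] at this
    exact_mod_cast this.symm
  have ha1' : (Nat.choose (2 * n + 2) k : ℚ) * (m + 3)
      = Nat.choose (2 * n + 1) k * (2 * n + 2) := by
    have := Nat.choose_mul_succ_eq (2 * n + 1) k
    have hs : 2 * n + 1 + 1 - k = m + 3 := by omega
    rw [hs] at this
    exact_mod_cast this.symm
  simp only [fq, gq, h1, h2, h3]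
  have e2n : 2 * (n + 1) = 2 * n + 2 := by ring
  rw [e2n]
  have hk1 : ((k : ℚ) + 1) ≠ 0 := by positivity
  have hm2 : ((m : ℚ) + 2) ≠ 0 := by positivity
  have hm3 : ((m : ℚ) + 3) ≠ 0 := by positivity
  have ea2 : (Nat.choose (2 * n) (k + 1) : ℚ)
      = Nat.choose (2 * n) k * (m + 1) / (k + 1) := by
    rw [eq_div_iff hk1]; exact ha2
  have eb : (Nat.choose (2 * (k + 1)) (k + 1) : ℚ)
      = 2 * (2 * k + 1) * Nat.choose (2 * k) k / (k + 1) := by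
    rw [eq_div_iff hk1]; linarith [hb]
  have ec0 : (Nat.choose (2 * m) m : ℚ)
      = ((m : ℚ) + 1) * Nat.choose (2 * (m + 1)) (m + 1) / (2 * (2 * m + 1)) := by
    rw [eq_div_iff (by positivity)]; linarith [hc0]
  have ec2 : (Nat.choose (2 * (m + 2)) (m + 2) : ℚ)
      = 2 * (2 * m + 3) * Nat.choose (2 * (m + 1)) (m + 1) / (m + 2) := by
    rw [eq_div_iff hm2]; linarith [hc2]
  have ec3 : (Nat.choose (2 * (m + 3)) (m + 3) : ℚ)
      = 2 * (2 * m + 5) * Nat.choose (2 * (m + 2)) (m + 2) / (m + 3) := by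
    rw [eq_div_iff hm3]; linarith [hc3]
  have ea1' : (Nat.choose (2 * n + 2) k : ℚ)
      = Nat.choose (2 * n + 1) k * (2 * n + 2) / (m + 3) := by
    rw [eq_div_iff hm3]; exact ha1'
  have ea1 : (Nat.choose (2 * n + 1) k : ℚ)
      = Nat.choose (2 * n) k * (2 * n + 1) / (m + 2) := by
    rw [eq_div_iff hm2]; exact ha1
  rw [ec3, ec2, ea1', ea1, ea2, eb, ec0]
  rw [pow_succ]
  push_cast
  rw [hn']
  have r1 : 2*(((k:ℚ)+m+1)/2)-(k+1)+1 = m+1 := by ring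
  have r2 : 2*(((k:ℚ)+m+1)/2)-(k+1)+2 = m+2 := by ring
  have r3 : 2*(((k:ℚ)+m+1)/2)-k+1 = m+2 := by ring
  have r4 : 2*(((k:ℚ)+m+1)/2)-k+2 = m+3 := by ring
  rw [r1, r2, r3, r4]
  field_simp
  ring

private lemma gq_zero (n : ℕ) : gq n 0 = 0 := by
  simp [gq]

set_option maxHeartbeats 1000000 in
private lemma boundary (n : ℕ) :
    gq n (2 * n) + ((n : ℚ) + 1) ^ 2
        * (fq (n + 1) (2 * n) + fq (n + 1) (2 * n + 1) + fq (n + 1) (2 * n + 2))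
      = 4 * (2 * (n : ℚ) + 1) ^ 2 * fq n (2 * n) := by
  have s1 : 2 * n - 2 * n = 0 := by omega
  have s2 : 2 * (n + 1) - 2 * n = 2 := by omega
  have s3 : 2 * (n + 1) - (2 * n + 1) = 1 := by omega
  have s4 : 2 * (n + 1) - (2 * n + 2) = 0 := by omega
  simp only [fq, gq, s1, s2, s3, s4]
  have p1 : (-1 : ℚ) ^ (2 * n) = 1 := by rw [pow_mul]; norm_num
  have p2 : (-1 : ℚ) ^ (2 * n + 1) = -1 := by rw [pow_succ, p1]; ring
  have p3 : (-1 : ℚ) ^ (2 * n + 2) = 1 := by rw [pow_succ, p2]; ring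
  rw [p1, p2, p3]
  have e1 : Nat.choose (2 * n) (2 * n) = 1 := Nat.choose_self _
  have e2 : Nat.choose (2 * (n + 1)) (2 * n) = Nat.choose (2 * n + 2) 2 := by
    have h : 2 * (n + 1) = 2 * n + 2 := by ring
    rw [h, ← Nat.choose_symm (show 2 ≤ 2*n+2 by omega)]
    congr 1
  have e3 : Nat.choose (2 * (n + 1)) (2 * n + 1) = 2 * n + 2 := by
    have h : 2 * (n + 1) = (2 * n + 1) + 1 := by ring
    rw [h, Nat.choose_succ_self_right]
  have e4 : Nat.choose (2 * (n + 1)) (2 * n + 2) = 1 := by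
    have h : 2 * (n + 1) = 2 * n + 2 := by ring
    rw [h, Nat.choose_self]
  have e5 : Nat.choose (2 * 2) 2 = 6 := by decide
  have e6 : Nat.choose (2 * 1) 1 = 2 := by decide
  have e7 : Nat.choose (2 * 0) 0 = 1 := by decide
  rw [e1, e2, e3, e4, e5, e6, e7]
  have e2' : ((Nat.choose (2 * n + 2) 2 : ℕ) : ℚ) = (2 * n + 2) * (2 * n + 1) / 2 := by
    rw [Nat.cast_choose_two]; push_cast; ring
  have hc1 : (2 * (n : ℚ) + 1) * Nat.choose (2 * (2 * n + 1)) (2 * n + 1)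
      = 2 * (2 * (2 * n) + 1) * Nat.choose (2 * (2 * n)) (2 * n) := by
    have := cb_succ (2 * n); push_cast at this ⊢; linarith [this]
  have hc2 : (2 * (n : ℚ) + 2) * Nat.choose (2 * (2 * n + 2)) (2 * n + 2)
      = 2 * (2 * (2 * n + 1) + 1) * Nat.choose (2 * (2 * n + 1)) (2 * n + 1) := by
    have := cb_succ (2 * n + 1); push_cast at this ⊢; linarith [this]
  have hn1 : (2 * (n : ℚ) + 1) ≠ 0 := by positivity
  have hn2 : (2 * (n : ℚ) + 2) ≠ 0 := by positivity
  have ec1 : (Nat.choose (2 * (2 * n + 1)) (2 * n + 1) : ℚ)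
      = 2 * (2 * (2 * n) + 1) * Nat.choose (2 * (2 * n)) (2 * n) / (2 * n + 1) := by
    rw [eq_div_iff hn1]; linarith [hc1]
  have ec2 : (Nat.choose (2 * (2 * n + 2)) (2 * n + 2) : ℚ)
      = 2 * (2 * (2 * n + 1) + 1) * Nat.choose (2 * (2 * n + 1)) (2 * n + 1) / (2 * n + 2) := by
    rw [eq_div_iff hn2]; linarith [hc2]
  rw [ec2, ec1, e2']
  push_cast
  field_simp
  ring

private lemma key_s11 (n : ℕ) :
    ((n : ℚ) + 1) ^ 2 * (∑ k ∈ range (2 * (n + 1) + 1), fq (n + 1) k)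
      = 4 * (2 * (n : ℚ) + 1) ^ 2 * (∑ k ∈ range (2 * n + 1), fq n k) := by
  have hsplit : 2 * (n + 1) + 1 = (2 * n + 1) + 1 + 1 := by ring
  rw [hsplit, sum_range_succ, sum_range_succ, sum_range_succ]
  rw [show ∑ k ∈ range (2 * n + 1), fq n k = (∑ k ∈ range (2 * n), fq n k) + fq n (2 * n)
    from sum_range_succ _ _]
  have tele : ∑ k ∈ range (2 * n), (gq n (k + 1) - gq n k) = gq n (2 * n) - gq n 0 :=
    Finset.sum_range_sub _ _
  have hsum : ∑ k ∈ range (2 * n),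
      (((n : ℚ) + 1) ^ 2 * fq (n + 1) k - 4 * (2 * (n : ℚ) + 1) ^ 2 * fq n k)
      = gq n (2 * n) := by
    rw [Finset.sum_congr rfl fun k hk => term_id n k (mem_range.mp hk), tele, gq_zero]
    ring
  rw [Finset.sum_sub_distrib, ← Finset.mul_sum, ← Finset.mul_sum] at hsum
  have hb := boundary n
  linear_combination hsum + hb

private lemma sumq (n : ℕ) :
    (∑ k ∈ range (2 * n + 1), fq n k) = ((Nat.choose (2 * n) n : ℚ)) ^ 2 := by
  induction n with
  | zero => simp [fq]
  | succ n ih =>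
    have hk := key_s11 n
    rw [ih] at hk
    have hcb : ((n : ℚ) + 1) * Nat.choose (2 * (n + 1)) (n + 1)
        = 2 * (2 * n + 1) * Nat.choose (2 * n) n := cb_succ n
    have hne : ((n : ℚ) + 1) ^ 2 ≠ 0 := by positivity
    have h2 : ((n : ℚ) + 1) ^ 2 * (∑ k ∈ range (2 * (n + 1) + 1), fq (n + 1) k)
        = ((n : ℚ) + 1) ^ 2 * ((Nat.choose (2 * (n + 1)) (n + 1) : ℚ)) ^ 2 := by
      rw [hk]
      linear_combination (-(((n : ℚ) + 1) * (Nat.choose (2 * (n + 1)) (n + 1) : ℚ)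
        + 2 * (2 * (n : ℚ) + 1) * (Nat.choose (2 * n) n : ℚ))) * hcb
    exact mul_left_cancel₀ hne h2

theorem stmt11 (n : ℕ) (hn : 1 ≤ n) :
    ∑ k ∈ Finset.range (2 * n + 1),
        (-1 : ℤ) ^ k * Nat.choose (2 * n) k * Nat.choose (2 * k) k
          * Nat.choose (2 * (2 * n - k)) (2 * n - k)
      = (Nat.choose (2 * n) n : ℤ) ^ 2 := by
  have h := sumq n
  have hcast : ((∑ k ∈ Finset.range (2 * n + 1),
      (-1 : ℤ) ^ k * Nat.choose (2 * n) k * Nat.choose (2 * k) k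
        * Nat.choose (2 * (2 * n - k)) (2 * n - k) : ℤ) : ℚ)
      = ((((Nat.choose (2 * n) n : ℤ)) ^ 2 : ℤ) : ℚ) := by
    push_cast
    simp only [fq] at h
    exact h
  exact_mod_cast hcast
end

section
/- For independent random variables X₁, X₂ each distributed Gamma(p) with p > 0 and rate 1, E[(X₁ - X₂)^{2n}] = Γ(n+p) · (2n)! / (Γ(n+1) · Γ(p)) for all natural numbers n ≥ 1. -/
/-!
Expanding `(X₁ - X₂) ^ (2 * n)` binomially and using independence reduces the claim to the
moments `m k = Γ(p + k) / Γ(p)` of `Gamma(p)`. With `a k = m k / k!`, the resulting sum is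
`(2n)!` times the coefficient of `t ^ (2 * n)` in `f(t) f(-t)`, where `f(t) = ∑ a k t ^ k` is
`(1 - t) ^ (-p)`. Since `f(t) f(-t) = (1 - t²) ^ (-p) = f(t²)`, this coefficient is `a n`;
formally, both sides satisfy the two-step recurrence coming from the differential equation
of `(1 - t²) ^ (-p)`.
-/

open MeasureTheory ProbabilityTheory Real
open Finset Nat

section AlternatingConvolution

theorem sum_antidiagonal_succ_natCast_fst_mul {R : Type*} [Semiring R] (f : ℕ → ℕ → R)
    (m : ℕ) :
    ∑ x ∈ antidiagonal (m + 1), (x.1 : R) * f x.1 x.2 =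
      ∑ x ∈ antidiagonal m, ((x.1 : R) + 1) * f (x.1 + 1) x.2 := by
  simp [Finset.Nat.sum_antidiagonal_succ]

theorem sum_antidiagonal_succ_natCast_snd_mul {R : Type*} [Semiring R] (f : ℕ → ℕ → R)
    (m : ℕ) :
    ∑ x ∈ antidiagonal (m + 1), (x.2 : R) * f x.1 x.2 =
      ∑ x ∈ antidiagonal m, ((x.2 : R) + 1) * f x.1 (x.2 + 1) := by
  simp [Finset.Nat.sum_antidiagonal_succ']

variable {R : Type*} [CommRing R] {p : R} {a b : ℕ → R}

theorem natCast_add_of_mem_antidiagonal {m : ℕ} {x : ℕ × ℕ} (hx : x ∈ antidiagonal m) :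
    (x.1 : R) + x.2 = m := by
  rw [← mem_antidiagonal.mp hx, Nat.cast_add]

-- The coefficients of `(1 - t²) h' = 2p t h` for `h = f g`, where `(1 - t) f' = p f` and
-- `(1 + t) g' = -p g`.
theorem mul_sum_antidiagonal_add_two
    (ha : ∀ k : ℕ, ((k : R) + 1) * a (k + 1) = (p + k) * a k)
    (hb : ∀ k : ℕ, ((k : R) + 1) * b (k + 1) = -((p + k) * b k)) (m : ℕ) :
    ((m : R) + 2) * ∑ x ∈ antidiagonal (m + 2), a x.1 * b x.2 =
      (2 * p + m) * ∑ x ∈ antidiagonal m, a x.1 * b x.2 := by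
  calc ((m : R) + 2) * ∑ x ∈ antidiagonal (m + 2), a x.1 * b x.2
      = ∑ x ∈ antidiagonal (m + 2), (x.1 : R) * (a x.1 * b x.2) +
          ∑ x ∈ antidiagonal (m + 2), (x.2 : R) * (a x.1 * b x.2) := by
        rw [mul_sum, ← sum_add_distrib]
        refine sum_congr rfl fun x hx => ?_
        rw [← add_mul, natCast_add_of_mem_antidiagonal hx]
        push_cast
        ring
    _ = ∑ x ∈ antidiagonal (m + 1),
          ((x.1 : R) * (a x.1 * b x.2) - (x.2 : R) * (a x.1 * b x.2)) := by
        rw [sum_antidiagonal_succ_natCast_fst_mul (fun i j => a i * b j),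
          sum_antidiagonal_succ_natCast_snd_mul (fun i j => a i * b j), ← sum_add_distrib]
        refine sum_congr rfl fun x _ => ?_
        linear_combination b x.2 * ha x.1 + a x.1 * hb x.2
    _ = (2 * p + m) * ∑ x ∈ antidiagonal m, a x.1 * b x.2 := by
        rw [sum_sub_distrib, sum_antidiagonal_succ_natCast_fst_mul (fun i j => a i * b j),
          sum_antidiagonal_succ_natCast_snd_mul (fun i j => a i * b j), ← sum_sub_distrib,
          mul_sum]
        refine sum_congr rfl fun x hx => ?_
        rw [← natCast_add_of_mem_antidiagonal hx]
        linear_combination b x.2 * ha x.1 - a x.1 * hb x.2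

end AlternatingConvolution

theorem sum_antidiagonal_two_mul_mul_neg_one_pow {K : Type*} [Field K] [CharZero K] {p : K}
    {a : ℕ → K} (ha : ∀ k : ℕ, ((k : K) + 1) * a (k + 1) = (p + k) * a k) (n : ℕ) :
    ∑ x ∈ antidiagonal (2 * n), a x.1 * ((-1) ^ x.2 * a x.2) = a 0 * a n := by
  induction n with
  | zero => simp
  | succ n ih =>
    have hb (k : ℕ) :
        ((k : K) + 1) * ((-1) ^ (k + 1) * a (k + 1)) = -((p + k) * ((-1) ^ k * a k)) := by
      linear_combination (-1) ^ (k + 1) * ha k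
    have hrec := mul_sum_antidiagonal_add_two (b := fun k => (-1) ^ k * a k) ha hb (2 * n)
    rw [ih] at hrec
    have hne : ((2 * n : ℕ) : K) + 2 ≠ 0 := by exact_mod_cast (2 * n + 1).succ_ne_zero
    refine mul_left_cancel₀ hne ?_
    rw [show 2 * (n + 1) = 2 * n + 2 by ring, hrec]
    push_cast
    linear_combination (-2) * a 0 * ha n

theorem sum_antidiagonal_choose_mul_neg_one_pow {K : Type*} [Field K] [CharZero K] {p : K}
    {M : ℕ → K} (hM : ∀ k : ℕ, M (k + 1) = (p + k) * M k) (n : ℕ) :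
    ∑ x ∈ antidiagonal (2 * n), ((2 * n).choose x.1 : K) * (-1) ^ x.2 * M x.1 * M x.2 =
      (2 * n)! / n ! * M 0 * M n := by
  have ha (k : ℕ) : ((k : K) + 1) * (M (k + 1) / (k + 1)!) = (p + k) * (M k / k !) := by
    rw [hM, Nat.factorial_succ]
    push_cast
    field_simp
  have h := sum_antidiagonal_two_mul_mul_neg_one_pow (a := fun k => M k / k !) ha n
  simp only [Nat.factorial_zero, Nat.cast_one, div_one] at h
  calc ∑ x ∈ antidiagonal (2 * n), ((2 * n).choose x.1 : K) * (-1) ^ x.2 * M x.1 * M x.2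
      = (2 * n)! * ∑ x ∈ antidiagonal (2 * n), M x.1 / x.1 ! * ((-1) ^ x.2 * (M x.2 / x.2 !)) := by
        rw [mul_sum]
        refine sum_congr rfl fun x hx => ?_
        rw [← mem_antidiagonal.mp hx, Nat.cast_add_choose]
        field_simp
    _ = (2 * n)! / n ! * M 0 * M n := by
        rw [h]
        ring

section GammaMoments

variable {a r : ℝ}

theorem gammaPDFReal_mul_pow_of_pos {x : ℝ} (hx : 0 < x) (k : ℕ) :
    gammaPDFReal a r x * x ^ k = r ^ a / Gamma a * (x ^ (a + k - 1) * exp (-(r * x))) := by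
  rw [gammaPDFReal, if_pos hx.le, ← rpow_natCast, show a + k - 1 = (a - 1) + k by ring,
    rpow_add hx]
  ring

theorem integral_gammaPDFReal_mul_pow (ha : 0 < a) (hr : 0 < r) (k : ℕ) :
    ∫ x, gammaPDFReal a r x * x ^ k = Gamma (a + k) / (r ^ k * Gamma a) := by
  have hsupp : ∀ x ∉ Set.Ici (0 : ℝ), gammaPDFReal a r x * x ^ k = 0 := fun x hx => by
    simp only [gammaPDFReal, if_neg (show ¬0 ≤ x from hx), zero_mul]
  rw [← setIntegral_eq_integral_of_forall_compl_eq_zero hsupp, integral_Ici_eq_integral_Ioi,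
    setIntegral_congr_fun measurableSet_Ioi fun x hx => gammaPDFReal_mul_pow_of_pos hx k,
    integral_const_mul, integral_rpow_mul_exp_neg_mul_Ioi (by positivity) hr,
    div_rpow zero_le_one hr.le, one_rpow, rpow_add hr, rpow_natCast]
  have := Gamma_pos_of_pos ha
  field_simp

theorem integrable_gammaPDFReal_mul_pow (ha : 0 < a) (hr : 0 < r) (k : ℕ) :
    Integrable (fun x => gammaPDFReal a r x * x ^ k) := by
  -- A function that is not integrable has Bochner integral zero.
  refine Integrable.of_integral_ne_zero ?_
  rw [integral_gammaPDFReal_mul_pow ha hr]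
  have := Gamma_pos_of_pos (show 0 < a + k by positivity)
  have := Gamma_pos_of_pos ha
  positivity

theorem toReal_gammaPDF_smul_pow (ha : 0 < a) (hr : 0 < r) (k : ℕ) :
    (fun x => (gammaPDF a r x).toReal • x ^ k) = fun x => gammaPDFReal a r x * x ^ k := by
  ext x
  rw [gammaPDF, ENNReal.toReal_ofReal (gammaPDFReal_nonneg ha hr x), smul_eq_mul]

theorem integrable_pow_gammaMeasure (ha : 0 < a) (hr : 0 < r) (k : ℕ) :
    Integrable (fun x => x ^ k) (gammaMeasure a r) := by
  rw [gammaMeasure, integrable_withDensity_iff_integrable_smul' (f := gammaPDF a r)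
    (measurable_gammaPDFReal a r).ennreal_ofReal (ae_of_all _ fun _ => ENNReal.ofReal_lt_top),
    toReal_gammaPDF_smul_pow ha hr]
  exact integrable_gammaPDFReal_mul_pow ha hr k

theorem integral_pow_gammaMeasure (ha : 0 < a) (hr : 0 < r) (k : ℕ) :
    ∫ x, x ^ k ∂gammaMeasure a r = Gamma (a + k) / (r ^ k * Gamma a) := by
  rw [gammaMeasure, integral_withDensity_eq_integral_toReal_smul (f := gammaPDF a r)
    (measurable_gammaPDFReal a r).ennreal_ofReal (ae_of_all _ fun _ => ENNReal.ofReal_lt_top),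
    toReal_gammaPDF_smul_pow ha hr, integral_gammaPDFReal_mul_pow ha hr]

end GammaMoments

theorem ProbabilityTheory.HasLaw.integrable_comp {Ω 𝓧 : Type*} {mΩ : MeasurableSpace Ω}
    {m𝓧 : MeasurableSpace 𝓧} {X : Ω → 𝓧} {ν : Measure 𝓧} {P : Measure Ω} (hX : HasLaw X ν P)
    {f : 𝓧 → ℝ} (hf : Integrable f ν) : Integrable (f ∘ X) P :=
  (hX.map_eq ▸ hf).comp_aemeasurable hX.aemeasurable

theorem integral_sub_pow_of_indepFun {Ω : Type*} {mΩ : MeasurableSpace Ω} {μ : Measure Ω}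
    {X Y : Ω → ℝ} (hXY : IndepFun X Y μ) (hX : ∀ k : ℕ, Integrable (fun ω => X ω ^ k) μ)
    (hY : ∀ k : ℕ, Integrable (fun ω => Y ω ^ k) μ) (m : ℕ) :
    ∫ ω, (X ω - Y ω) ^ m ∂μ = ∑ x ∈ antidiagonal m,
      (m.choose x.1 : ℝ) * (-1) ^ x.2 * (∫ ω, X ω ^ x.1 ∂μ) * ∫ ω, Y ω ^ x.2 ∂μ := by
  have hexpand (ω : Ω) : (X ω - Y ω) ^ m =
      ∑ x ∈ antidiagonal m, (m.choose x.1 : ℝ) * (-1) ^ x.2 * (X ω ^ x.1 * Y ω ^ x.2) := by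
    rw [sub_eq_add_neg, (Commute.all _ _).add_pow']
    refine sum_congr rfl fun x _ => ?_
    rw [neg_pow, nsmul_eq_mul]
    ring
  have hindep (i j : ℕ) : IndepFun (fun ω => X ω ^ i) (fun ω => Y ω ^ j) μ :=
    hXY.comp (measurable_id.pow_const i) (measurable_id.pow_const j)
  simp_rw [hexpand]
  rw [integral_finsetSum _ fun x _ =>
    ((hindep x.1 x.2).integrable_mul (hX x.1) (hY x.2)).const_mul _]
  refine sum_congr rfl fun x _ => ?_
  rw [integral_const_mul, (hindep x.1 x.2).integral_fun_mul_eq_mul_integral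
    (hX x.1).aestronglyMeasurable (hY x.2).aestronglyMeasurable]
  ring

theorem stmt13_general {Ω : Type*} [MeasureSpace Ω] (μ : Measure Ω)
    (p : ℝ) (hp : 0 < p) (X₁ X₂ : Ω → ℝ)
    (h₁ : Measure.map X₁ μ = gammaMeasure p 1)
    (h₂ : Measure.map X₂ μ = gammaMeasure p 1)
    (hind : IndepFun X₁ X₂ μ)
    (hm₁ : Measurable X₁) (hm₂ : Measurable X₂)
    (n : ℕ) :
    ∫ ω, (X₁ ω - X₂ ω) ^ (2 * n) ∂μ
      = Real.Gamma (n + p) * (Nat.factorial (2 * n)) / (Real.Gamma (n + 1) * Real.Gamma p) := by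
  have hmoments {X : Ω → ℝ} (hX : HasLaw X (gammaMeasure p 1) μ) :
      (∀ k : ℕ, Integrable (fun ω => X ω ^ k) μ) ∧
        ∀ k : ℕ, ∫ ω, X ω ^ k ∂μ = Gamma (p + k) / Gamma p := by
    refine ⟨fun k => hX.integrable_comp (integrable_pow_gammaMeasure hp one_pos k), fun k => ?_⟩
    have h := hX.integral_comp (integrable_pow_gammaMeasure hp one_pos k).aestronglyMeasurable
    rwa [integral_pow_gammaMeasure hp one_pos, one_pow, one_mul] at h
  obtain ⟨hint₁, hmom₁⟩ := hmoments ⟨hm₁.aemeasurable, h₁⟩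
  obtain ⟨hint₂, hmom₂⟩ := hmoments ⟨hm₂.aemeasurable, h₂⟩
  have hrec (k : ℕ) :
      Gamma (p + (k + 1 : ℕ)) / Gamma p = (p + k) * (Gamma (p + k) / Gamma p) := by
    rw [Nat.cast_succ, ← add_assoc, Gamma_add_one (by positivity)]
    ring
  rw [integral_sub_pow_of_indepFun hind hint₁ hint₂]
  simp only [hmom₁, hmom₂]
  rw [sum_antidiagonal_choose_mul_neg_one_pow (M := fun k : ℕ => Gamma (p + k) / Gamma p) hrec n,
    Nat.cast_zero, add_zero, div_self (Gamma_pos_of_pos hp).ne', Gamma_nat_eq_factorial,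
    add_comm p]
  ring

theorem stmt13 {Ω : Type*} [MeasureSpace Ω] (μ : Measure Ω) [IsProbabilityMeasure μ]
    (p : ℝ) (hp : 0 < p) (X₁ X₂ : Ω → ℝ)
    (h₁ : Measure.map X₁ μ = gammaMeasure p 1)
    (h₂ : Measure.map X₂ μ = gammaMeasure p 1)
    (hind : IndepFun X₁ X₂ μ)
    (hm₁ : Measurable X₁) (hm₂ : Measurable X₂)
    (n : ℕ) (hn : 1 ≤ n) :
    ∫ ω, (X₁ ω - X₂ ω) ^ (2 * n) ∂μ
      = Real.Gamma (n + p) * (Nat.factorial (2 * n)) / (Real.Gamma (n + 1) * Real.Gamma p) :=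
  stmt13_general μ p hp X₁ X₂ h₁ h₂ hind hm₁ hm₂ n
end

section
/- For all natural numbers n, (1/π) · ∫₀¹ u^{n - 1/2} · ₂F₁(1/2, 1/2; 1; 1-u) du = C(2n, n)² / 4^{2n}, where ₂F₁(1/2,1/2;1;z) = ∑_{k=0}^{∞} ((1/2)_k)²/(k!)² · z^k. -/
open Real

/-- The Gauss hypergeometric function ₂F₁(1/2, 1/2; 1; z) as a series. -/
noncomputable def twoF1half (z : ℝ) : ℝ :=
  ∑' k : ℕ, (Real.Gamma (1 / 2 + k) / Real.Gamma (1 / 2)) ^ 2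
    / (Nat.factorial k : ℝ) ^ 2 * z ^ k

/-!
Since `(1/2)_k / k! = C(2k,k) / 4^k`, termwise integration with the Beta integral
`∫₀¹ u^s (1-u)^k du = k! / (s+1)_{k+1}` turns the integral into `F(n + 3/2) / (n + 1/2)`, where
`F(c) = ₂F₁(1/2, 1/2; c; 1)`. Gauss's contiguous relation `(c - 1/2)² F(c+1) = c (c-1) F(c)`,
which telescopes termwise, shows that `F(n + 3/2) W n` does not depend on `n`, `W n` being
Wallis's partial product. As `n → ∞`, `F(n + 3/2) → 1` by dominated convergence and
`W n → π/2`, so `F(n + 3/2) W n = π/2`; the identity `W n (2n+1) (C(2n,n)/4^n)² = 1` concludes.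
-/

open Filter Topology MeasureTheory intervalIntegral Nat

noncomputable section

lemma ascPochhammer_eval_succ_left {S : Type*} [CommSemiring S] (x : S) (k : ℕ) :
    (ascPochhammer S (k + 1)).eval x = x * (ascPochhammer S k).eval (x + 1) := by
  simp [ascPochhammer_succ_left]

lemma ascPochhammer_eval_le_eval {x y : ℝ} (hx : 0 < x) (hxy : x ≤ y) (k : ℕ) :
    (ascPochhammer ℝ k).eval x ≤ (ascPochhammer ℝ k).eval y := by
  induction k with
  | zero => simp
  | succ k ih =>
    rw [ascPochhammer_succ_eval, ascPochhammer_succ_eval]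
    exact mul_le_mul ih (by linarith) (by positivity) (ascPochhammer_pos k y (by linarith)).le

lemma Real.Gamma_add_nat_eq_ascPochhammer_mul {x : ℝ} (hx : 0 < x) (k : ℕ) :
    Gamma (x + k) = (ascPochhammer ℝ k).eval x * Gamma x := by
  induction k with
  | zero => simp
  | succ k ih =>
    rw [Nat.cast_succ, ← add_assoc, Gamma_add_one (by positivity), ih, ascPochhammer_succ_eval]
    ring

lemma intervalIntegrable_rpow_mul_one_sub_pow {s : ℝ} (hs : -1 < s) (k : ℕ) :
    IntervalIntegrable (fun u : ℝ => u ^ s * (1 - u) ^ k) volume 0 1 :=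
  (intervalIntegrable_rpow' hs).mul_continuousOn (by fun_prop)

lemma integral_rpow_mul_one_sub_pow {s : ℝ} (hs : -1 < s) (k : ℕ) :
    ∫ u in (0 : ℝ)..1, u ^ s * (1 - u) ^ k = k ! / (ascPochhammer ℝ (k + 1)).eval (s + 1) := by
  induction k generalizing s with
  | zero => simp [integral_rpow (Or.inl hs), zero_rpow (by linarith : s + 1 ≠ 0)]
  | succ k ih =>
    have hs' : -1 < s + 1 := by linarith
    have hs1 : s + 1 ≠ 0 := by linarith
    have hsplit : ∫ u in (0 : ℝ)..1, u ^ s * (1 - u) ^ (k + 1) =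
        (∫ u in (0 : ℝ)..1, u ^ s * (1 - u) ^ k) - ∫ u in (0 : ℝ)..1, u ^ (s + 1) * (1 - u) ^ k := by
      rw [← integral_sub (intervalIntegrable_rpow_mul_one_sub_pow hs k)
        (intervalIntegrable_rpow_mul_one_sub_pow hs' k)]
      refine integral_congr fun u hu => ?_
      have hu0 : 0 ≤ u := by simp at hu; exact hu.1
      rw [rpow_add_one' hu0 (by linarith)]
      ring
    have hleft := ascPochhammer_eval_succ_left (s + 1 : ℝ) (k + 1)
    have hright := ascPochhammer_succ_eval (k + 1) (s + 1 : ℝ)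
    have := ascPochhammer_pos (k + 1) (s + 1 : ℝ) (by linarith)
    have := ascPochhammer_pos (k + 1) (s + 1 + 1 : ℝ) (by linarith)
    rw [hsplit, ih hs, ih hs', hleft, factorial_succ]
    rw [hleft] at hright
    push_cast at hright ⊢
    field_simp
    linear_combination hright

def centralCoeff (k : ℕ) : ℝ := centralBinom k / 4 ^ k

lemma centralCoeff_zero : centralCoeff 0 = 1 := by simp [centralCoeff]

lemma centralCoeff_pos (k : ℕ) : 0 < centralCoeff k := by
  have := centralBinom_pos k
  unfold centralCoeff
  positivity

lemma centralCoeff_le_one (k : ℕ) : centralCoeff k ≤ 1 := by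
  rw [centralCoeff, div_le_one (by positivity)]
  exact_mod_cast centralBinom_le_four_pow k

lemma centralCoeff_succ (k : ℕ) :
    centralCoeff (k + 1) = centralCoeff k * ((2 * k + 1) / (2 * k + 2)) := by
  have h : ((k : ℝ) + 1) * centralBinom (k + 1) = 2 * (2 * k + 1) * centralBinom k := by
    exact_mod_cast succ_mul_centralBinom_succ k
  unfold centralCoeff
  rw [pow_succ]
  field_simp
  linear_combination 2 * h

lemma ascPochhammer_eval_half (k : ℕ) :
    (ascPochhammer ℝ k).eval (1 / 2) = centralCoeff k * k ! := by
  induction k with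
  | zero => simp [centralCoeff_zero]
  | succ k ih =>
    rw [ascPochhammer_succ_eval, ih, centralCoeff_succ, factorial_succ]
    push_cast
    field_simp
    ring

lemma ascPochhammer_eval_three_halves (k : ℕ) :
    (ascPochhammer ℝ k).eval (3 / 2) = centralCoeff k * k ! * (2 * k + 1) := by
  have h := ascPochhammer_eval_succ_left (1 / 2 : ℝ) k
  rw [ascPochhammer_eval_half, centralCoeff_succ, factorial_succ] at h
  norm_num at h
  field_simp at h
  linear_combination -h

lemma wallis_mul_sq_centralCoeff (n : ℕ) :
    Real.Wallis.W n * (2 * n + 1) * centralCoeff n ^ 2 = 1 := by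
  rw [Real.Wallis.W_eq_factorial_ratio, centralCoeff, centralBinom_eq_two_mul_choose,
    cast_choose ℝ (by omega : n ≤ 2 * n), show 2 * n - n = n by omega,
    show (2 : ℝ) ^ (4 * n) = (4 ^ n) ^ 2 by rw [← pow_mul, pow_mul, mul_comm, pow_mul]; norm_num]
  field_simp

lemma tendsto_centralCoeff_atTop : Tendsto centralCoeff atTop (𝓝 0) := by
  have hW : Tendsto (fun n : ℕ => Real.Wallis.W n * (2 * n + 1)) atTop atTop :=
    Real.Wallis.tendsto_W_nhds_pi_div_two.pos_mul_atTop (by positivity)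
      (tendsto_atTop_add_const_right _ _ (tendsto_natCast_atTop_atTop.const_mul_atTop two_pos))
  have hsq : Tendsto (fun n => centralCoeff n ^ 2) atTop (𝓝 0) :=
    (tendsto_inv_atTop_zero.comp hW).congr fun n =>
      (eq_inv_of_mul_eq_one_right (wallis_mul_sq_centralCoeff n)).symm
  simpa [sqrt_sq (centralCoeff_pos _).le] using hsq.sqrt

lemma summable_centralCoeff_div : Summable fun k : ℕ => centralCoeff k / (2 * k + 1) := by
  refine summable_of_sum_range_le (c := 2) (fun k => by have := centralCoeff_pos k; positivity)
    fun N => ?_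
  -- `centralCoeff k - centralCoeff (k + 1) = centralCoeff k / (2k + 2)` telescopes
  have hle : ∀ k, centralCoeff k / (2 * k + 1) ≤ 2 * (centralCoeff k - centralCoeff (k + 1)) := by
    intro k
    have := centralCoeff_pos k
    rw [centralCoeff_succ, div_le_iff₀ (by positivity)]
    field_simp
    nlinarith
  calc ∑ k ∈ Finset.range N, centralCoeff k / (2 * k + 1)
      ≤ ∑ k ∈ Finset.range N, 2 * (centralCoeff k - centralCoeff (k + 1)) :=
        Finset.sum_le_sum fun k _ => hle k
    _ = 2 * (1 - centralCoeff N) := by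
        rw [← Finset.mul_sum, Finset.sum_range_sub', centralCoeff_zero]
    _ ≤ 2 := by linarith [centralCoeff_pos N]

/-- The `k`-th term of `₂F₁(1/2, 1/2; c; 1)`, as `(1/2)_k = centralCoeff k * k!`. -/
def hypergeomTerm (c : ℝ) (k : ℕ) : ℝ := centralCoeff k ^ 2 * k ! / (ascPochhammer ℝ k).eval c

def hypergeomAtOne (c : ℝ) : ℝ := ∑' k, hypergeomTerm c k

section HypergeomTerm

variable {c : ℝ}

lemma hypergeomTerm_zero (c : ℝ) : hypergeomTerm c 0 = 1 := by
  simp [hypergeomTerm, centralCoeff_zero]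

lemma hypergeomTerm_nonneg (hc : 0 < c) (k : ℕ) : 0 ≤ hypergeomTerm c k := by
  have := ascPochhammer_pos k c hc
  unfold hypergeomTerm
  positivity

lemma hypergeomTerm_succ (hc : 0 < c) (k : ℕ) :
    hypergeomTerm c (k + 1) =
      hypergeomTerm c k * ((2 * k + 1) ^ 2 / (4 * (k + 1) * (c + k))) := by
  have := ascPochhammer_pos k c hc
  rw [hypergeomTerm, hypergeomTerm, centralCoeff_succ, ascPochhammer_succ_eval, factorial_succ]
  push_cast
  field_simp
  ring

lemma hypergeomTerm_add_one (hc : 0 < c) (k : ℕ) :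
    hypergeomTerm (c + 1) k = hypergeomTerm c k * (c / (c + k)) := by
  have h := ascPochhammer_eval_succ_left c k
  rw [ascPochhammer_succ_eval] at h
  have := ascPochhammer_pos k (c + 1) (by linarith)
  have := ascPochhammer_pos k c hc
  rw [hypergeomTerm, hypergeomTerm]
  field_simp
  linear_combination centralCoeff k ^ 2 * h

lemma hypergeomTerm_le (hc : 3 / 2 ≤ c) (k : ℕ) :
    hypergeomTerm c k ≤ centralCoeff k / (2 * k + 1) := by
  have := centralCoeff_pos k
  have hpos := ascPochhammer_pos k (3 / 2 : ℝ) (by norm_num)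
  calc hypergeomTerm c k ≤ hypergeomTerm (3 / 2) k :=
        div_le_div_of_nonneg_left (by positivity) hpos
          (ascPochhammer_eval_le_eval (by norm_num) hc k)
    _ = centralCoeff k / (2 * k + 1) := by
        rw [hypergeomTerm, ascPochhammer_eval_three_halves]
        field_simp

lemma hypergeomTerm_succ_le (hc : 1 ≤ c) (k : ℕ) : hypergeomTerm c (k + 1) ≤ (k + 1) / c := by
  have hpos := ascPochhammer_pos k (1 : ℝ) one_pos
  have hmono := ascPochhammer_eval_le_eval one_pos (by linarith : (1 : ℝ) ≤ c + 1) k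
  have hsq : centralCoeff (k + 1) ^ 2 ≤ 1 :=
    pow_le_one₀ (centralCoeff_pos _).le (centralCoeff_le_one _)
  rw [ascPochhammer_eval_one] at hpos hmono
  rw [hypergeomTerm, ascPochhammer_eval_succ_left, factorial_succ]
  push_cast
  calc centralCoeff (k + 1) ^ 2 * ((k + 1) * k !) / (c * (ascPochhammer ℝ k).eval (c + 1))
      ≤ 1 * ((k + 1) * k !) / (c * k !) := by gcongr
    _ = (k + 1) / c := by field_simp

lemma summable_hypergeomTerm (hc : 3 / 2 ≤ c) : Summable (hypergeomTerm c) :=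
  summable_centralCoeff_div.of_nonneg_of_le (hypergeomTerm_nonneg (by linarith))
    (hypergeomTerm_le hc)

lemma tendsto_nat_mul_hypergeomTerm (hc : 3 / 2 ≤ c) :
    Tendsto (fun k : ℕ => k * hypergeomTerm c k) atTop (𝓝 0) := by
  refine squeeze_zero (fun k => mul_nonneg k.cast_nonneg (hypergeomTerm_nonneg (by linarith) k))
    (fun k => ?_) tendsto_centralCoeff_atTop
  have := centralCoeff_pos k
  calc k * hypergeomTerm c k ≤ k * (centralCoeff k / (2 * k + 1)) := by
        gcongr; exact hypergeomTerm_le hc k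
    _ ≤ centralCoeff k := by
        rw [mul_div_assoc', div_le_iff₀ (by positivity)]
        nlinarith

lemma hypergeomTerm_contiguous (hc : 0 < c) (k : ℕ) :
    (c - 1 / 2) ^ 2 * hypergeomTerm (c + 1) k - c * (c - 1) * hypergeomTerm c k =
      c * ((k + 1) * hypergeomTerm c (k + 1) - k * hypergeomTerm c k) := by
  have : c + k ≠ 0 := by positivity
  rw [hypergeomTerm_add_one hc, hypergeomTerm_succ hc]
  field_simp
  ring

lemma hypergeomAtOne_add_one (hc : 3 / 2 ≤ c) :
    (c - 1 / 2) ^ 2 * hypergeomAtOne (c + 1) = c * (c - 1) * hypergeomAtOne c := by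
  set w : ℕ → ℝ := fun k => k * hypergeomTerm c k
  have hsum : HasSum (fun k => c * (w (k + 1) - w k))
      ((c - 1 / 2) ^ 2 * hypergeomAtOne (c + 1) - c * (c - 1) * hypergeomAtOne c) := by
    have h := ((summable_hypergeomTerm (c := c + 1) (by linarith)).hasSum.mul_left
      ((c - 1 / 2) ^ 2)).sub ((summable_hypergeomTerm hc).hasSum.mul_left (c * (c - 1)))
    have hterm : (fun k => (c - 1 / 2) ^ 2 * hypergeomTerm (c + 1) k -
        c * (c - 1) * hypergeomTerm c k) = fun k => c * (w (k + 1) - w k) := by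
      funext k
      simp only [w, hypergeomTerm_contiguous (by linarith : 0 < c) k]
      push_cast
      ring
    rwa [hterm] at h
  have htele : HasSum (fun k => c * (w (k + 1) - w k)) 0 := by
    rw [hsum.summable.hasSum_iff_tendsto_nat]
    simp_rw [← Finset.mul_sum, Finset.sum_range_sub]
    simpa [w] using (tendsto_nat_mul_hypergeomTerm hc).const_mul c
  linear_combination hsum.unique htele

end HypergeomTerm

lemma tendsto_hypergeomAtOne : Tendsto hypergeomAtOne atTop (𝓝 1) := by
  have hlim : ∀ k, Tendsto (hypergeomTerm · k) atTop (𝓝 (if k = 0 then 1 else 0)) := by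
    rintro (_ | k)
    · simp [hypergeomTerm_zero]
    · refine squeeze_zero' ((eventually_gt_atTop 0).mono fun c hc => hypergeomTerm_nonneg hc _)
        ((eventually_ge_atTop 1).mono fun c hc => hypergeomTerm_succ_le hc k)
        ((tendsto_const_nhds (x := (k + 1 : ℝ))).div_atTop tendsto_id)
  have hbound : ∀ᶠ c in atTop, ∀ k, ‖hypergeomTerm c k‖ ≤ centralCoeff k / (2 * k + 1) :=
    (eventually_ge_atTop (3 / 2)).mono fun c hc k => by
      rw [norm_of_nonneg (hypergeomTerm_nonneg (by linarith) k)]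
      exact hypergeomTerm_le hc k
  have h := tendsto_tsum_of_dominated_convergence summable_centralCoeff_div hlim hbound
  rwa [tsum_ite_eq] at h

lemma hypergeomAtOne_mul_wallis (n : ℕ) :
    hypergeomAtOne (n + 3 / 2) * Real.Wallis.W n = π / 2 := by
  set R : ℕ → ℝ := fun m => hypergeomAtOne (m + 3 / 2) * Real.Wallis.W m
  have hstep : ∀ m, R (m + 1) = R m := by
    intro m
    have h := hypergeomAtOne_add_one (c := m + 3 / 2) (by linarith [m.cast_nonneg (α := ℝ)])
    simp only [R, Real.Wallis.W_succ]
    rw [show ((m + 1 : ℕ) : ℝ) + 3 / 2 = m + 3 / 2 + 1 by push_cast; ring]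
    set F₀ := hypergeomAtOne (m + 3 / 2)
    set F₁ := hypergeomAtOne (m + 3 / 2 + 1)
    field_simp
    linear_combination 4 * Real.Wallis.W m * h
  have hconst : ∀ m, R m = R 0 := by
    intro m
    induction m with
    | zero => rfl
    | succ m ih => rw [hstep, ih]
  have hlim : Tendsto R atTop (𝓝 (1 * (π / 2))) :=
    (tendsto_hypergeomAtOne.comp
      (tendsto_atTop_add_const_right _ _ tendsto_natCast_atTop_atTop)).mul
      Real.Wallis.tendsto_W_nhds_pi_div_two
  have hlim₀ : Tendsto R atTop (𝓝 (R 0)) := tendsto_const_nhds.congr fun m => (hconst m).symm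
  rw [← one_mul (π / 2), ← tendsto_nhds_unique hlim₀ hlim]
  exact hconst n

lemma twoF1half_eq_tsum (z : ℝ) : twoF1half z = ∑' k, centralCoeff k ^ 2 * z ^ k := by
  unfold twoF1half
  congr 1
  funext k
  have := factorial_pos k
  rw [Gamma_add_nat_eq_ascPochhammer_mul (by norm_num), mul_div_assoc,
    div_self (Gamma_pos_of_pos (by norm_num)).ne', mul_one, ascPochhammer_eval_half]
  field_simp

lemma intervalIntegral_tsum_of_nonneg {f : ℕ → ℝ → ℝ} {a b : ℝ} (hab : a ≤ b)
    (hint : ∀ k, IntervalIntegrable (f k) volume a b) (hnn : ∀ k, ∀ u ∈ Set.Ioc a b, 0 ≤ f k u)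
    (hsum : Summable fun k => ∫ u in a..b, f k u) :
    ∫ u in a..b, ∑' k, f k u = ∑' k, ∫ u in a..b, f k u := by
  simp only [integral_of_le hab] at hsum ⊢
  refine (integral_tsum_of_summable_integral_norm (fun k => (hint k).1)
    (hsum.congr fun k => ?_)).symm
  exact setIntegral_congr_fun measurableSet_Ioc fun u hu => (norm_of_nonneg (hnn k u hu)).symm

lemma integral_rpow_mul_twoF1half_one_sub {s : ℝ} (hs : -1 / 2 ≤ s) :
    ∫ u in (0 : ℝ)..1, u ^ s * twoF1half (1 - u) = hypergeomAtOne (s + 2) / (s + 1) := by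
  have hs' : -1 < s := by linarith
  have hterm : ∀ k : ℕ, ∫ u in (0 : ℝ)..1, centralCoeff k ^ 2 * (u ^ s * (1 - u) ^ k) =
      hypergeomTerm (s + 2) k / (s + 1) := by
    intro k
    have := ascPochhammer_pos k (s + 2) (by linarith)
    rw [intervalIntegral.integral_const_mul, integral_rpow_mul_one_sub_pow hs', ascPochhammer_eval_succ_left,
      hypergeomTerm, show s + 1 + 1 = s + 2 by ring]
    field_simp
  simp_rw [twoF1half_eq_tsum, ← tsum_mul_left, mul_left_comm _ (centralCoeff _ ^ 2)]
  rw [intervalIntegral_tsum_of_nonneg zero_le_one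
    (fun k => (intervalIntegrable_rpow_mul_one_sub_pow hs' k).const_mul _)
    (fun k u hu => mul_nonneg (sq_nonneg _)
      (mul_nonneg (rpow_nonneg hu.1.le _) (pow_nonneg (sub_nonneg.2 hu.2) _))) ?_]
  · simp_rw [hterm]
    exact tsum_div_const ..
  · simp_rw [hterm]
    exact (summable_hypergeomTerm (by linarith)).div_const _

end

theorem stmt18 (n : ℕ) :
    (1 / π) * ∫ u in (0:ℝ)..1, u ^ ((n : ℝ) - 1 / 2) * twoF1half (1 - u)
      = (Nat.choose (2 * n) n : ℝ) ^ 2 / 4 ^ (2 * n) := by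
  have hF := hypergeomAtOne_mul_wallis n
  have hW := wallis_mul_sq_centralCoeff n
  have hcoeff : centralCoeff n ^ 2 = (Nat.choose (2 * n) n : ℝ) ^ 2 / 4 ^ (2 * n) := by
    rw [centralCoeff, centralBinom_eq_two_mul_choose, div_pow, ← pow_mul, mul_comm n]
  rw [integral_rpow_mul_twoF1half_one_sub (by linarith [n.cast_nonneg (α := ℝ)]), ← hcoeff,
    show (n : ℝ) - 1 / 2 + 2 = n + 3 / 2 by ring, show (n : ℝ) - 1 / 2 + 1 = n + 1 / 2 by ring]
  have := Real.Wallis.W_pos n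
  set F := hypergeomAtOne (n + 3 / 2)
  field_simp
  linear_combination (-2 * F) * hW + 2 * (2 * n + 1) * centralCoeff n ^ 2 * hF
end

section
/- For all natural numbers n, ∑_{k=0}^{∞} ((1/2)_k)² · Γ(n + 1/2) / (k! · Γ(n + k + 3/2)) = (π / 4^{2n}) · C(2n, n)². -/
/-!
Let `T n` be the sum and `c n = C(2n, n) / 4ⁿ`. Comparing the summands at `(n, k)`, `(n + 1, k)`
and `(n, k + 1)` shows that `(n + 1/2) (t n k - ((2n+2)/(2n+1))² t (n+1) k)` telescopes in `k`,
so `T (n + 1) = ((2n+1)/(2n+2))² T n` and hence `T n = c n ² T 0`. To evaluate `T 0`: the scaled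
summands `(n + 1/2) t n k` decrease in `n` to `δ k 0`, so by dominated convergence
`(n + 1/2) T n → 1`, while Wallis' product gives `(2n + 1) c n ² → 2 / π`. Hence `T 0 = π`.
-/

open Real Filter Topology

theorem hasSum_sub_succ_of_tendsto {G : Type*} [AddCommGroup G] [TopologicalSpace G]
    [IsTopologicalAddGroup G] [T2Space G] {g : ℕ → G} {l : G}
    (hs : Summable fun k => g k - g (k + 1)) (hg : Tendsto g atTop (𝓝 l)) :
    HasSum (fun k => g k - g (k + 1)) (g 0 - l) := by
  rw [hs.hasSum_iff_tendsto_nat]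
  simp_rw [Finset.sum_range_sub']
  exact tendsto_const_nhds.sub hg

noncomputable def centralBinomRatio (k : ℕ) : ℝ := k.centralBinom / 4 ^ k

theorem centralBinomRatio_pos (k : ℕ) : 0 < centralBinomRatio k := by
  unfold centralBinomRatio
  have := k.centralBinom_pos
  positivity

theorem centralBinomRatio_succ (k : ℕ) :
    centralBinomRatio (k + 1) = centralBinomRatio k * ((2 * k + 1) / (2 * k + 2)) := by
  have h : ((k : ℝ) + 1) * (k + 1).centralBinom = 2 * (2 * k + 1) * k.centralBinom := by
    exact_mod_cast Nat.succ_mul_centralBinom_succ k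
  unfold centralBinomRatio
  field_simp
  rw [pow_succ]
  linear_combination (2 * 4 ^ k : ℝ) * h

theorem summable_centralBinomRatio_div :
    Summable fun k : ℕ => centralBinomRatio k / (2 * k + 1) := by
  have hdiff : ∀ k : ℕ, centralBinomRatio k - centralBinomRatio (k + 1)
      = centralBinomRatio k / (2 * k + 2) := by
    intro k
    rw [centralBinomRatio_succ]
    field_simp
    ring
  have htel : Summable fun k => centralBinomRatio k - centralBinomRatio (k + 1) := by
    refine summable_of_sum_range_le (c := centralBinomRatio 0) (fun k => ?_) (fun N => ?_)
    · rw [hdiff]; exact (div_pos (centralBinomRatio_pos k) (by positivity)).le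
    · rw [Finset.sum_range_sub']
      linarith [centralBinomRatio_pos N]
  refine (htel.mul_left 2).of_nonneg_of_le
    (fun k => (div_pos (centralBinomRatio_pos k) (by positivity)).le) (fun k => ?_)
  have := centralBinomRatio_pos k
  rw [hdiff]
  field_simp
  nlinarith

theorem Real.Wallis.W_eq_inv_centralBinomRatio (k : ℕ) :
    Wallis.W k = ((2 * k + 1) * centralBinomRatio k ^ 2)⁻¹ := by
  induction k with
  | zero => simp [Wallis.W, centralBinomRatio]
  | succ k ih =>
    rw [Wallis.W_succ, ih, centralBinomRatio_succ]
    have := centralBinomRatio_pos k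
    push_cast
    field_simp
    ring

theorem tendsto_mul_centralBinomRatio_sq :
    Tendsto (fun k : ℕ => (2 * k + 1) * centralBinomRatio k ^ 2) atTop (𝓝 (2 / π)) := by
  have h := Wallis.tendsto_W_nhds_pi_div_two.inv₀ (by positivity)
  simp only [Wallis.W_eq_inv_centralBinomRatio, inv_inv, inv_div] at h
  exact h

theorem tendsto_centralBinomRatio : Tendsto centralBinomRatio atTop (𝓝 0) := by
  have hsq : Tendsto (fun k : ℕ => centralBinomRatio k ^ 2) atTop (𝓝 0) := by
    have hinv : Tendsto (fun k : ℕ => ((2 * k + 1 : ℝ))⁻¹) atTop (𝓝 0) :=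
      (tendsto_atTop_add_const_right _ 1
        (tendsto_natCast_atTop_atTop.const_mul_atTop two_pos)).inv_tendsto_atTop
    simpa using (tendsto_mul_centralBinomRatio_sq.mul hinv).congr (fun k => by field_simp)
  simpa [Real.sqrt_sq (centralBinomRatio_pos _).le] using hsq.sqrt

noncomputable def summand (n k : ℕ) : ℝ :=
  (Gamma (1 / 2 + k) / Gamma (1 / 2)) ^ 2 * Gamma (n + 1 / 2)
    / ((Nat.factorial k : ℝ) * Gamma (n + k + 3 / 2))

theorem summand_pos (n k : ℕ) : 0 < summand n k := by
  have := Nat.factorial_pos k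
  have := Gamma_pos_of_pos (by positivity : (0 : ℝ) < 1 / 2 + k)
  have := Gamma_pos_of_pos (by positivity : (0 : ℝ) < n + 1 / 2)
  have := Gamma_pos_of_pos (by positivity : (0 : ℝ) < n + k + 3 / 2)
  unfold summand
  positivity

theorem summand_zero_right (n : ℕ) : summand n 0 = ((n : ℝ) + 1 / 2)⁻¹ := by
  have := (Gamma_pos_of_pos (by positivity : (0 : ℝ) < n + 1 / 2)).ne'
  have h : (n : ℝ) + (0 : ℕ) + 3 / 2 = n + 1 / 2 + 1 := by push_cast; ring
  rw [summand, h, Gamma_add_one (by positivity)]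
  simp only [Nat.cast_zero, add_zero, Nat.factorial_zero, Nat.cast_one, one_mul]
  field_simp

theorem summand_succ_right (n k : ℕ) :
    summand n (k + 1) = summand n k * ((k + 1 / 2) ^ 2 / ((k + 1) * (n + k + 3 / 2))) := by
  have h₁ : (1 / 2 + (k + 1 : ℕ) : ℝ) = 1 / 2 + k + 1 := by push_cast; ring
  have h₂ : (n + (k + 1 : ℕ) + 3 / 2 : ℝ) = n + k + 3 / 2 + 1 := by push_cast; ring
  have := (Gamma_pos_of_pos (by positivity : (0 : ℝ) < 1 / 2 + k)).ne'
  have := (Gamma_pos_of_pos (by positivity : (0 : ℝ) < n + k + 3 / 2)).ne'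
  have := (Gamma_pos_of_pos (by norm_num : (0 : ℝ) < 1 / 2)).ne'
  unfold summand
  rw [h₁, h₂, Gamma_add_one (by positivity), Gamma_add_one (by positivity), Nat.factorial_succ]
  push_cast
  field_simp
  ring

theorem summand_succ_left (n k : ℕ) :
    summand (n + 1) k = summand n k * ((n + 1 / 2) / (n + k + 3 / 2)) := by
  have h₁ : ((n + 1 : ℕ) + 1 / 2 : ℝ) = n + 1 / 2 + 1 := by push_cast; ring
  have h₂ : ((n + 1 : ℕ) + k + 3 / 2 : ℝ) = n + k + 3 / 2 + 1 := by push_cast; ring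
  have := (Gamma_pos_of_pos (by positivity : (0 : ℝ) < n + k + 3 / 2)).ne'
  have := Nat.factorial_pos k
  unfold summand
  rw [h₁, h₂, Gamma_add_one (by positivity), Gamma_add_one (by positivity)]
  field_simp

noncomputable def scaledSummand (n k : ℕ) : ℝ := (n + 1 / 2) * summand n k

theorem scaledSummand_pos (n k : ℕ) : 0 < scaledSummand n k :=
  mul_pos (by positivity) (summand_pos n k)

theorem scaledSummand_zero_right (n : ℕ) : scaledSummand n 0 = 1 := by
  rw [scaledSummand, summand_zero_right, mul_inv_cancel₀ (by positivity)]

theorem scaledSummand_succ_right (n k : ℕ) :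
    scaledSummand n (k + 1)
      = scaledSummand n k * ((k + 1 / 2) ^ 2 / ((k + 1) * (n + k + 3 / 2))) := by
  rw [scaledSummand, scaledSummand, summand_succ_right, mul_assoc]

theorem scaledSummand_succ_left (n k : ℕ) :
    scaledSummand (n + 1) k = scaledSummand n k * ((n + 3 / 2) / (n + k + 3 / 2)) := by
  rw [scaledSummand, scaledSummand, summand_succ_left]
  push_cast
  field_simp
  ring

theorem scaledSummand_zero_left (k : ℕ) :
    scaledSummand 0 k = centralBinomRatio k / (2 * k + 1) := by
  induction k with
  | zero => simp [scaledSummand_zero_right, centralBinomRatio]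
  | succ k ih =>
    rw [scaledSummand_succ_right, ih, centralBinomRatio_succ]
    push_cast
    field_simp
    ring

theorem scaledSummand_le_zero_left (n k : ℕ) : scaledSummand n k ≤ scaledSummand 0 k := by
  refine antitone_nat_of_succ_le (f := (scaledSummand · k)) (fun m => ?_) n.zero_le
  rw [scaledSummand_succ_left]
  refine mul_le_of_le_one_right (scaledSummand_pos m k).le ((div_le_one (by positivity)).mpr ?_)
  linarith [(k.cast_nonneg : (0 : ℝ) ≤ k)]

theorem summand_le (n k : ℕ) : summand n k ≤ 2 * (centralBinomRatio k / (2 * k + 1)) := by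
  rw [← scaledSummand_zero_left]
  calc summand n k ≤ 2 * scaledSummand n k := by
        rw [scaledSummand, ← mul_assoc]
        refine le_mul_of_one_le_left (summand_pos n k).le ?_
        linarith [(n.cast_nonneg : (0 : ℝ) ≤ n)]
    _ ≤ 2 * scaledSummand 0 k := by gcongr; exact scaledSummand_le_zero_left n k

theorem summable_summand (n : ℕ) : Summable (summand n) :=
  (summable_centralBinomRatio_div.mul_left 2).of_nonneg_of_le (fun k => (summand_pos n k).le)
    (summand_le n)

theorem tendsto_scaledSummand (k : ℕ) :
    Tendsto (scaledSummand · k) atTop (𝓝 (if k = 0 then 1 else 0)) := by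
  induction k with
  | zero => simp [scaledSummand_zero_right]
  | succ k ih =>
    have hratio : Tendsto (fun n : ℕ => (k + 1 / 2 : ℝ) ^ 2 / ((k + 1) * (n + k + 3 / 2)))
        atTop (𝓝 0) := by
      refine tendsto_const_nhds.div_atTop (Tendsto.const_mul_atTop (by positivity) ?_)
      exact tendsto_atTop_add_const_right _ _
        (tendsto_atTop_add_const_right _ _ tendsto_natCast_atTop_atTop)
    simpa [scaledSummand_succ_right] using ih.mul hratio

theorem tendsto_tsum_scaledSummand :
    Tendsto (fun n => ∑' k, scaledSummand n k) atTop (𝓝 1) := by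
  have h := tendsto_tsum_of_dominated_convergence (f := scaledSummand)
    summable_centralBinomRatio_div tendsto_scaledSummand (.of_forall fun n k => ?_)
  · simpa using h
  rw [norm_of_nonneg (scaledSummand_pos n k).le, ← scaledSummand_zero_left]
  exact scaledSummand_le_zero_left n k

theorem mul_summand_sub_summand_succ_left (n k : ℕ) :
    (n + 1 / 2) * (summand n k - ((2 * n + 2) / (2 * n + 1)) ^ 2 * summand (n + 1) k)
      = k * summand n k - (k + 1 : ℕ) * summand n (k + 1) := by
  rw [summand_succ_left, summand_succ_right]
  push_cast
  field_simp
  ring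

theorem tendsto_natCast_mul_summand (n : ℕ) :
    Tendsto (fun k : ℕ => k * summand n k) atTop (𝓝 0) := by
  refine squeeze_zero (fun k => mul_nonneg k.cast_nonneg (summand_pos n k).le) (fun k => ?_)
    tendsto_centralBinomRatio
  have := centralBinomRatio_pos k
  calc k * summand n k ≤ k * (2 * (centralBinomRatio k / (2 * k + 1))) := by
        gcongr; exact summand_le n k
    _ ≤ centralBinomRatio k := by
        rw [mul_div_assoc', mul_div_assoc', div_le_iff₀ (by positivity)]
        nlinarith

theorem tsum_summand_succ_left (n : ℕ) :
    ∑' k, summand (n + 1) k = ((2 * n + 1) / (2 * n + 2)) ^ 2 * ∑' k, summand n k := by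
  have hdiff := (summable_summand n).hasSum.sub
    ((summable_summand (n + 1)).hasSum.mul_left ((((2 * n + 2) / (2 * n + 1)) ^ 2 : ℝ)))
  have htel : HasSum (fun k => ((n : ℝ) + 1 / 2) *
      (summand n k - ((2 * n + 2) / (2 * n + 1)) ^ 2 * summand (n + 1) k)) 0 := by
    simp_rw [mul_summand_sub_summand_succ_left]
    simpa using hasSum_sub_succ_of_tendsto ((hdiff.summable.mul_left _).congr
      (mul_summand_sub_summand_succ_left n)) (tendsto_natCast_mul_summand n)
  have h := (hdiff.mul_left ((n : ℝ) + 1 / 2)).unique htel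
  field_simp at h ⊢
  linear_combination -h

theorem tsum_summand_eq (n : ℕ) :
    ∑' k, summand n k = centralBinomRatio n ^ 2 * ∑' k, summand 0 k := by
  induction n with
  | zero => simp [centralBinomRatio]
  | succ n ih => rw [tsum_summand_succ_left, ih, centralBinomRatio_succ]; ring

theorem tsum_summand_zero_left : ∑' k, summand 0 k = π := by
  have hlim : Tendsto (fun n : ℕ => ∑' k, scaledSummand n k) atTop
      (𝓝 (2 / π * (∑' k, summand 0 k) / 2)) := by
    refine ((tendsto_mul_centralBinomRatio_sq.mul_const _).div_const 2).congr fun n => ?_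
    simp_rw [scaledSummand, tsum_mul_left, tsum_summand_eq n]
    ring
  have := tendsto_nhds_unique hlim tendsto_tsum_scaledSummand
  field_simp at this
  linarith

theorem stmt19 (n : ℕ) :
    ∑' k : ℕ, (Real.Gamma (1 / 2 + k) / Real.Gamma (1 / 2)) ^ 2 * Real.Gamma (n + 1 / 2)
        / ((Nat.factorial k : ℝ) * Real.Gamma (n + k + 3 / 2))
      = (π / 4 ^ (2 * n)) * (Nat.choose (2 * n) n : ℝ) ^ 2 := by
  show ∑' k, summand n k = _
  rw [tsum_summand_eq, tsum_summand_zero_left, centralBinomRatio,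
    Nat.centralBinom_eq_two_mul_choose]
  ring
end
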